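/- arXiv:1010.5706 — 5 statements merged into one kernel-verified Lean document; each statement's English description precedes it below -/
import Mathlib

section
/- Let R, R' be non-negative integer m-vectors and C, C' be non-negative integer n-vectors with |R| = |C| = |R'| = |C'|. If R' dominates R and C' dominates C, then |A_0(R,C)| ≥ |A_0(R',C')|. -/
open Finset

/-- The set of `m × n` zero-one matrices with row sums `R` and column sums `C`. -/
def matA0 {m n : ℕ} (R : Fin m → ℕ) (C : Fin n → ℕ) : Set (Matrix (Fin m) (Fin n) ℕ) :=
  {D | (∀ i j, D i j ≤ 1) ∧ (∀ i, ∑ j, D i j = R i) ∧ (∀ j, ∑ i, D i j = C j)}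

/-- For vectors arranged in non-increasing order, `X` dominates (majorizes) `Y` if every
partial sum of `X` is at least the corresponding partial sum of `Y`, with equal total sums. -/
def Dominates {p : ℕ} (X Y : Fin p → ℕ) : Prop :=
  (∀ k : ℕ, k ≤ p →
    ∑ i ∈ Finset.univ.filter (fun i : Fin p => (i : ℕ) < k), Y i ≤
      ∑ i ∈ Finset.univ.filter (fun i : Fin p => (i : ℕ) < k), X i) ∧
  ∑ i, X i = ∑ i, Y i

/-!
Moving one unit from a column sum `C k` to a smaller one `C l` cannot increase `|A₀(R, C)|`.
Merge columns `k` and `l` of a zero-one matrix into column `l`. Over a fixed merged matrix `σ`,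
a zero-one matrix is determined by the set of rows with `σ i l = 1` whose one lies in column `l`;
with `s` such rows and `C l = #{i | σ i l = 2} + b`, the fibre has `choose s b` elements before
the move and `choose s (b + 1)` after it, and `b < s - b` is exactly `C l < C k`.

If `C'` dominates an antitone `C` and `C' ≠ C`, let `j` be the first index with `C' j < C j` and
`i < j` one with `C' i > C i`; then `C' j < C j ≤ C i < C' i`, and moving a unit of `C'` from `i`
to `j` keeps the dominance and decreases `∑ u, (C' u - C u)`. Iterating reaches `C`, and
transposition gives the same for rows.
-/

lemma sum_eq_two_mul_card_add_card {ι : Type*} [Fintype ι] {w : ι → ℕ}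
    (hw : ∀ i, w i ≤ 2) :
    ∑ i, w i = 2 * #{i | w i = 2} + #{i | w i = 1} := by
  simp only [card_filter, mul_sum, ← sum_add_distrib]
  exact sum_congr rfl fun i _ => by have := hw i; split_ifs <;> omega

lemma sum_eq_sum_of_add_eq_add {ι M : Type*} [Fintype ι] [DecidableEq ι] [AddCommMonoid M]
    {f g : ι → M} {k l : ι} (hkl : k ≠ l) (hpair : f k + f l = g k + g l)
    (hrest : ∀ j, j ≠ k → j ≠ l → f j = g j) : ∑ j, f j = ∑ j, g j := by
  have split (φ : ι → M) :
      ∑ j, φ j = φ k + φ l + ∑ j ∈ (univ.erase k).erase l, φ j := by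
    rw [add_assoc, add_sum_erase _ _ (mem_erase.2 ⟨hkl.symm, mem_univ l⟩),
      add_sum_erase _ _ (mem_univ k)]
  rw [split f, split g, hpair]
  congr 1
  exact sum_congr rfl fun j hj => by
    simp only [mem_erase] at hj
    exact hrest j hj.2.1 hj.1

lemma matA0_finite {m n : ℕ} (R : Fin m → ℕ) (C : Fin n → ℕ) : (matA0 R C).Finite :=
  (Set.Finite.pi fun _ => Set.Finite.pi fun _ => Set.finite_Iic 1).subset
    fun _ hD i _ j _ => hD.1 i j

lemma ncard_matA0_comm {m n : ℕ} (R : Fin m → ℕ) (C : Fin n → ℕ) :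
    (matA0 R C).ncard = (matA0 C R).ncard := by
  have himage : Matrix.transpose '' matA0 R C = matA0 C R := by
    ext E
    refine ⟨?_, fun hE =>
      ⟨E.transpose, ⟨fun i j => hE.1 j i, hE.2.2, hE.2.1⟩, E.transpose_transpose⟩⟩
    rintro ⟨D, hD, rfl⟩
    exact ⟨fun i j => hD.1 j i, hD.2.2, hD.2.1⟩
  rw [← himage, Set.ncard_image_of_injective _ Matrix.transpose_injective]

lemma Nat.choose_le_choose_succ_of_lt_sub {n r : ℕ} (h : r < n - r) :
    n.choose r ≤ n.choose (r + 1) := by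
  refine Nat.le_of_mul_le_mul_right ?_ r.succ_pos
  rw [Nat.choose_succ_right_eq]
  exact Nat.mul_le_mul_left _ h

section MergeSplit

variable {m n : ℕ} {k l : Fin n} {D σ : Matrix (Fin m) (Fin n) ℕ} {T : Finset (Fin m)}

def mergeCols (k l : Fin n) (D : Matrix (Fin m) (Fin n) ℕ) : Matrix (Fin m) (Fin n) ℕ :=
  fun i j => if j = k then 0 else if j = l then D i k + D i l else D i j

def exclusiveRows (k l : Fin n) (D : Matrix (Fin m) (Fin n) ℕ) : Finset (Fin m) :=
  {i | D i k = 0 ∧ D i l = 1}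

def splitCols (k l : Fin n) (σ : Matrix (Fin m) (Fin n) ℕ) (T : Finset (Fin m)) :
    Matrix (Fin m) (Fin n) ℕ :=
  fun i j =>
    if j = k then σ i l - ((if σ i l = 2 then 1 else 0) + if i ∈ T then 1 else 0)
    else if j = l then (if σ i l = 2 then 1 else 0) + if i ∈ T then 1 else 0
    else σ i j

lemma mergeCols_apply_right (hkl : k ≠ l) (i : Fin m) :
    mergeCols k l D i l = D i k + D i l := by
  simp [mergeCols, hkl.symm]

lemma splitCols_mergeCols (hkl : k ≠ l) (hD : ∀ i j, D i j ≤ 1) :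
    splitCols k l (mergeCols k l D) (exclusiveRows k l D) = D := by
  funext i j
  have := hD i k
  have := hD i l
  by_cases hjk : j = k
  · subst hjk
    simp only [splitCols, mergeCols_apply_right hkl, exclusiveRows, mem_filter, mem_univ,
      true_and, if_true]
    split_ifs <;> omega
  by_cases hjl : j = l
  · subst hjl
    simp only [splitCols, mergeCols_apply_right hkl, exclusiveRows, mem_filter, mem_univ,
      true_and, if_neg hjk, if_true]
    split_ifs <;> omega
  · simp [splitCols, mergeCols, hjk, hjl]

lemma mergeCols_splitCols (hkl : k ≠ l) (hσ : ∀ i, σ i k = 0) (hT : ∀ i ∈ T, σ i l = 1) :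
    mergeCols k l (splitCols k l σ T) = σ := by
  funext i j
  by_cases hjk : j = k
  · simp [mergeCols, hjk, hσ]
  by_cases hjl : j = l
  · subst hjl
    have := hT i
    simp only [mergeCols_apply_right hkl, splitCols, if_true, if_neg hkl.symm]
    split_ifs <;> grind
  · simp [mergeCols, splitCols, hjk, hjl]

lemma splitCols_injOn (hkl : k ≠ l) :
    Set.InjOn (splitCols k l σ) {T | ∀ i ∈ T, σ i l = 1} := by
  have mem_of_eq {T T' : Finset (Fin m)} (hT : ∀ i ∈ T, σ i l = 1)
      (h : splitCols k l σ T = splitCols k l σ T') {i : Fin m} (hi : i ∈ T) : i ∈ T' := by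
    have := congrFun (congrFun h i) l
    simp only [splitCols, hkl.symm, if_true, if_false, hT i hi, hi] at this
    by_contra hi'
    simp [hi'] at this
  intro T hT T' hT' h
  ext i
  exact ⟨mem_of_eq hT h, mem_of_eq hT' h.symm⟩

lemma sum_splitCols_right (hkl : k ≠ l) :
    ∑ i, splitCols k l σ T i l = #{i | σ i l = 2} + #T := by
  simp [splitCols, hkl.symm, sum_add_distrib, sum_boole]

lemma sum_col_eq_card_add_card_exclusiveRows (hkl : k ≠ l) (hD : ∀ i j, D i j ≤ 1) :
    ∑ i, D i l = #{i | mergeCols k l D i l = 2} + #(exclusiveRows k l D) :=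
  calc ∑ i, D i l = ∑ i, splitCols k l (mergeCols k l D) (exclusiveRows k l D) i l := by
        rw [splitCols_mergeCols hkl hD]
    _ = _ := sum_splitCols_right hkl

lemma mergeCols_eq_one_of_mem_exclusiveRows (hkl : k ≠ l) {i : Fin m}
    (hi : i ∈ exclusiveRows k l D) : mergeCols k l D i l = 1 := by
  simp only [exclusiveRows, mem_filter, mem_univ, true_and] at hi
  rw [mergeCols_apply_right hkl, hi.1, hi.2]

lemma splitCols_mem_matA0 (hkl : k ≠ l) {R : Fin m → ℕ} {C C' : Fin n → ℕ}
    (hD : D ∈ matA0 R C) (hT : ∀ i ∈ T, mergeCols k l D i l = 1)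
    (hl : C' l = #{i | mergeCols k l D i l = 2} + #T)
    (hpair : C' k + C' l = C k + C l) (hrest : ∀ j, j ≠ k → j ≠ l → C' j = C j) :
    splitCols k l (mergeCols k l D) T ∈ matA0 R C' := by
  set E := splitCols k l (mergeCols k l D) T
  have hpairs (i : Fin m) : E i k + E i l = D i k + D i l ∧ E i k ≤ 1 ∧ E i l ≤ 1 := by
    have := hD.1 i k
    have := hD.1 i l
    have := hT i
    simp only [E, splitCols, mergeCols_apply_right hkl, if_true, if_neg hkl.symm] at this ⊢
    split_ifs <;> grind
  have hrest_entries (i : Fin m) (j : Fin n) (hjk : j ≠ k) (hjl : j ≠ l) : E i j = D i j := by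
    simp [E, splitCols, mergeCols, hjk, hjl]
  refine ⟨fun i j => ?_, fun i => ?_, fun j => ?_⟩
  · by_cases hjk : j = k
    · exact hjk ▸ (hpairs i).2.1
    by_cases hjl : j = l
    · exact hjl ▸ (hpairs i).2.2
    · exact hrest_entries i j hjk hjl ▸ hD.1 i j
  · rw [← hD.2.1 i]
    exact sum_eq_sum_of_add_eq_add hkl (hpairs i).1 (hrest_entries i)
  · have hcol_l : ∑ i, E i l = C' l := by rw [sum_splitCols_right hkl, hl]
    by_cases hjk : j = k
    · have hsum : ∑ i, E i k + ∑ i, E i l = C k + C l := by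
        rw [← sum_add_distrib, ← hD.2.2 k, ← hD.2.2 l, ← sum_add_distrib]
        exact sum_congr rfl fun i _ => (hpairs i).1
      subst hjk
      omega
    by_cases hjl : j = l
    · exact hjl ▸ hcol_l
    · rw [hrest j hjk hjl, ← hD.2.2 j]
      exact sum_congr rfl fun i _ => hrest_entries i j hjk hjl

end MergeSplit

noncomputable def matA0Finset {m n : ℕ} (R : Fin m → ℕ) (C : Fin n → ℕ) :
    Finset (Matrix (Fin m) (Fin n) ℕ) :=
  (matA0_finite R C).toFinset

lemma mem_matA0Finset {m n : ℕ} {R : Fin m → ℕ} {C : Fin n → ℕ}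
    {D : Matrix (Fin m) (Fin n) ℕ} : D ∈ matA0Finset R C ↔ D ∈ matA0 R C :=
  Set.Finite.mem_toFinset _

lemma ncard_matA0_eq_card {m n : ℕ} (R : Fin m → ℕ) (C : Fin n → ℕ) :
    (matA0 R C).ncard = #(matA0Finset R C) :=
  Set.ncard_eq_toFinset_card _ (matA0_finite R C)

section Transfer

variable {m n : ℕ} {k l : Fin n} {R : Fin m → ℕ}

lemma card_fiber_le_choose (hkl : k ≠ l) {C : Fin n → ℕ} {D₀ : Matrix (Fin m) (Fin n) ℕ}
    (hD₀ : D₀ ∈ matA0 R C) :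
    #{D ∈ matA0Finset R C | mergeCols k l D = mergeCols k l D₀} ≤
      (#{i | mergeCols k l D₀ i l = 1}).choose #(exclusiveRows k l D₀) := by
  rw [← card_powersetCard]
  refine card_le_card_of_injOn (exclusiveRows k l) (fun D hD => ?_)
    fun D₁ hD₁ D₂ hD₂ h => ?_
  · simp only [coe_filter, mem_matA0Finset, Set.mem_ofPred_eq] at hD
    rw [mem_coe, mem_powersetCard]
    refine ⟨fun i hi => ?_, ?_⟩
    · simpa [← hD.2] using mergeCols_eq_one_of_mem_exclusiveRows hkl hi
    · have h := sum_col_eq_card_add_card_exclusiveRows hkl hD.1.1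
      have h₀ := sum_col_eq_card_add_card_exclusiveRows hkl hD₀.1
      rw [hD.1.2.2 l, hD.2] at h
      rw [hD₀.2.2 l] at h₀
      omega
  · simp only [coe_filter, mem_matA0Finset, Set.mem_ofPred_eq] at hD₁ hD₂
    calc D₁ = splitCols k l (mergeCols k l D₁) (exclusiveRows k l D₁) :=
          (splitCols_mergeCols hkl hD₁.1.1).symm
      _ = splitCols k l (mergeCols k l D₂) (exclusiveRows k l D₂) := by rw [hD₁.2, hD₂.2, h]
      _ = D₂ := splitCols_mergeCols hkl hD₂.1.1

lemma choose_le_card_fiber (hkl : k ≠ l) {C C' : Fin n → ℕ}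
    {D₀ : Matrix (Fin m) (Fin n) ℕ} (hD₀ : D₀ ∈ matA0 R C) {r : ℕ}
    (hl : C' l = #{i | mergeCols k l D₀ i l = 2} + r)
    (hpair : C' k + C' l = C k + C l) (hrest : ∀ j, j ≠ k → j ≠ l → C' j = C j) :
    (#{i | mergeCols k l D₀ i l = 1}).choose r ≤
      #{D ∈ matA0Finset R C' | mergeCols k l D = mergeCols k l D₀} := by
  rw [← card_powersetCard]
  have hS {T : Finset (Fin m)} (hT : T ∈ powersetCard r {i | mergeCols k l D₀ i l = 1}) :
      ∀ i ∈ T, mergeCols k l D₀ i l = 1 := fun i hi => by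
    simpa using (mem_powersetCard.1 hT).1 hi
  refine card_le_card_of_injOn (splitCols k l (mergeCols k l D₀)) (fun T hT => ?_)
    ((splitCols_injOn hkl).mono fun T hT => hS hT)
  simp only [coe_filter, mem_matA0Finset, Set.mem_ofPred_eq]
  refine ⟨splitCols_mem_matA0 hkl hD₀ (hS hT) ?_ hpair hrest,
    mergeCols_splitCols hkl (fun i => by simp [mergeCols]) (hS hT)⟩
  rw [hl, (mem_powersetCard.1 hT).2]

theorem ncard_matA0_le_of_add_single_eq {C C' : Fin n → ℕ} (hlt : C l < C k)
    (hC' : C' + Pi.single k 1 = C + Pi.single l 1) :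
    (matA0 R C).ncard ≤ (matA0 R C').ncard := by
  have hkl : k ≠ l := fun h => (h ▸ hlt).false
  have hC'k : C' k + 1 = C k := by simpa [hkl] using congrFun hC' k
  have hC'l : C' l = C l + 1 := by simpa [hkl.symm] using congrFun hC' l
  have hrest (j : Fin n) (hjk : j ≠ k) (hjl : j ≠ l) : C' j = C j := by
    simpa [hjk, hjl] using congrFun hC' j
  have hfiber (D₀ : Matrix (Fin m) (Fin n) ℕ) (hD₀ : D₀ ∈ matA0 R C) :
      #{D ∈ matA0Finset R C | mergeCols k l D = mergeCols k l D₀} ≤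
        #{D ∈ matA0Finset R C' | mergeCols k l D = mergeCols k l D₀} := by
    set b := #(exclusiveRows k l D₀)
    have hCl : C l = #{i | mergeCols k l D₀ i l = 2} + b :=
      hD₀.2.2 l ▸ sum_col_eq_card_add_card_exclusiveRows hkl hD₀.1
    have hCkl :
        C k + C l = 2 * #{i | mergeCols k l D₀ i l = 2} + #{i | mergeCols k l D₀ i l = 1} := by
      rw [← hD₀.2.2 k, ← hD₀.2.2 l, ← sum_add_distrib, ← sum_eq_two_mul_card_add_card]
      · simp only [mergeCols_apply_right hkl]
      · intro i
        have := hD₀.1 i k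
        have := hD₀.1 i l
        rw [mergeCols_apply_right hkl]
        omega
    calc _ ≤ (#{i | mergeCols k l D₀ i l = 1}).choose b := card_fiber_le_choose hkl hD₀
      _ ≤ (#{i | mergeCols k l D₀ i l = 1}).choose (b + 1) :=
          Nat.choose_le_choose_succ_of_lt_sub (by omega)
      _ ≤ _ := choose_le_card_fiber hkl hD₀ (by omega) (by omega) hrest
  rw [ncard_matA0_eq_card, ncard_matA0_eq_card, card_eq_sum_card_image (mergeCols k l)]
  calc _ ≤ ∑ σ ∈ (matA0Finset R C).image (mergeCols k l),
          #{D ∈ matA0Finset R C' | mergeCols k l D = σ} :=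
        sum_le_sum (forall_mem_image.2 fun D₀ hD₀ => hfiber D₀ (mem_matA0Finset.1 hD₀))
    _ = #{D ∈ matA0Finset R C' | mergeCols k l D ∈ (matA0Finset R C).image (mergeCols k l)} :=
        sum_card_fiberwise_eq_card_filter _ _ _
    _ ≤ #(matA0Finset R C') := card_filter_le _ _

end Transfer

section Majorization

lemma sum_add_ite_eq_of_add_single_eq {ι : Type*} [DecidableEq ι] {X X' : ι → ℕ} {i j : ι}
    (h : X' + Pi.single i 1 = X + Pi.single j 1) (s : Finset ι) :
    ∑ u ∈ s, X' u + (if i ∈ s then 1 else 0) =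
      ∑ u ∈ s, X u + if j ∈ s then 1 else 0 := by
  simpa [sum_add_distrib, sum_pi_single'] using congrArg (fun f => ∑ u ∈ s, f u) h

lemma sum_tsub_lt_of_add_single_eq {ι : Type*} [Fintype ι] [DecidableEq ι] {X X' Y : ι → ℕ}
    {i j : ι} (h : X' + Pi.single i 1 = X + Pi.single j 1) (hi : Y i < X i) (hj : X j < Y j) :
    ∑ u, (X' u - Y u) < ∑ u, (X u - Y u) := by
  have hij : i ≠ j := by rintro rfl; omega
  refine sum_lt_sum (fun u _ => ?_) ⟨i, mem_univ i, ?_⟩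
  · have := congrFun h u
    simp only [Pi.add_apply, Pi.single_apply] at this
    split_ifs at this with hui huj huj <;> subst_vars <;> omega
  · have := congrFun h i
    simp only [Pi.add_apply, Pi.single_apply, if_true, if_neg hij] at this
    omega

variable {p : ℕ} {X Y : Fin p → ℕ}

lemma Dominates.of_add_single_eq (h : Dominates X Y) {i j : Fin p} (hij : i < j)
    (hi : Y i < X i) (hle : ∀ u < j, Y u ≤ X u) {X' : Fin p → ℕ}
    (hX' : X' + Pi.single i 1 = X + Pi.single j 1) : Dominates X' Y := by
  obtain ⟨hpre, hsum⟩ := h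
  refine ⟨fun k hk => ?_, ?_⟩
  · have key := sum_add_ite_eq_of_add_single_eq hX' {u : Fin p | (u : ℕ) < k}
    simp only [mem_filter, mem_univ, true_and] at key
    have hij' : (i : ℕ) < j := hij
    by_cases hik : (i : ℕ) < k
    · by_cases hjk : (j : ℕ) < k
      · have := hpre k hk
        simp only [hik, hjk, if_true] at key
        omega
      · have hlt : ∑ u ∈ {u : Fin p | (u : ℕ) < k}, Y u <
            ∑ u ∈ {u : Fin p | (u : ℕ) < k}, X u :=
          sum_lt_sum (fun u hu => hle u (by simp only [mem_filter] at hu; omega))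
            ⟨i, by simpa using hik, hi⟩
        simp only [hik, hjk, if_true, if_false] at key
        omega
    · have := hpre k hk
      simp only [hik, show ¬ (j : ℕ) < k by omega, if_false] at key
      omega
  · have key := sum_add_ite_eq_of_add_single_eq hX' univ
    simp only [mem_univ, if_true] at key
    omega

lemma Dominates.exists_add_single_eq (hY : Antitone Y) (h : Dominates X Y) (hne : X ≠ Y) :
    ∃ i j X', X j < X i ∧ X' + Pi.single i 1 = X + Pi.single j 1 ∧ Dominates X' Y ∧
      ∑ u, (X' u - Y u) < ∑ u, (X u - Y u) := by
  have hex : ∃ u, X u < Y u := by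
    by_contra! hge
    exact hne (funext fun u => ((sum_eq_sum_iff_of_le fun u _ => hge u).1 h.2.symm u
      (mem_univ u)).symm)
  obtain ⟨j, hj, hjmin⟩ := wellFounded_lt.has_min {u | X u < Y u} hex
  have hle (u : Fin p) (hu : u < j) : Y u ≤ X u := not_lt.1 fun h' => hjmin u h' hu
  obtain ⟨i, hij, hi⟩ : ∃ i < j, Y i < X i := by
    by_contra! hXY
    have hlt : ∑ u ∈ {u : Fin p | (u : ℕ) < j + 1}, X u <
        ∑ u ∈ {u : Fin p | (u : ℕ) < j + 1}, Y u := by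
      refine sum_lt_sum (fun u hu => ?_) ⟨j, by simp, hj⟩
      simp only [mem_filter, mem_univ, true_and] at hu
      rcases (Nat.lt_succ_iff.1 hu).lt_or_eq with hu | hu
      · exact hXY u hu
      · exact (Fin.ext hu ▸ hj).le
    exact (h.1 (j + 1) j.isLt).not_gt hlt
  have hX' : X + Pi.single j 1 - Pi.single i 1 + Pi.single i 1 = X + Pi.single j 1 := by
    refine tsub_add_cancel_of_le fun u => ?_
    simp only [Pi.add_apply, Pi.single_apply]
    split_ifs with hui <;> subst_vars <;> omega
  exact ⟨i, j, _, (hj.trans_le (hY hij.le)).trans hi, hX', h.of_add_single_eq hij hi hle hX',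
    sum_tsub_lt_of_add_single_eq hX' hi hj⟩

end Majorization

theorem ncard_matA0_le_of_dominates {m n : ℕ} (R : Fin m → ℕ) {X Y : Fin n → ℕ}
    (hY : Antitone Y) (h : Dominates X Y) : (matA0 R X).ncard ≤ (matA0 R Y).ncard := by
  by_cases hne : X = Y
  · rw [hne]
  obtain ⟨i, j, X', hlt, hX', hdom, hdec⟩ := h.exists_add_single_eq hY hne
  exact (ncard_matA0_le_of_add_single_eq hlt hX').trans (ncard_matA0_le_of_dominates R hY hdom)
termination_by ∑ u, (X u - Y u)

theorem stmt6_general (m n : ℕ) (R R' : Fin m → ℕ) (C C' : Fin n → ℕ)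
    (hRmono : Antitone R)
    (hCmono : Antitone C)
    (hdomR : Dominates R' R) (hdomC : Dominates C' C) :
    (matA0 R' C').ncard ≤ (matA0 R C).ncard :=
  calc (matA0 R' C').ncard ≤ (matA0 R' C).ncard := ncard_matA0_le_of_dominates R' hCmono hdomC
    _ = (matA0 C R').ncard := ncard_matA0_comm R' C
    _ ≤ (matA0 C R).ncard := ncard_matA0_le_of_dominates C hRmono hdomR
    _ = (matA0 R C).ncard := (ncard_matA0_comm R C).symm

theorem stmt6 (m n : ℕ) (R R' : Fin m → ℕ) (C C' : Fin n → ℕ)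
    (hRmono : Antitone R) (hR'mono : Antitone R')
    (hCmono : Antitone C) (hC'mono : Antitone C')
    (hbal : ∑ i, R i = ∑ j, C j) (hbal' : ∑ i, R' i = ∑ j, C' j)
    (hRR' : ∑ i, R i = ∑ i, R' i)
    (hdomR : Dominates R' R) (hdomC : Dominates C' C) :
    (matA0 R' C').ncard ≤ (matA0 R C).ncard :=
  stmt6_general m n R R' C C' hRmono hCmono hdomR hdomC
end

section
/- Let R, R' be non-negative integer m-vectors and C, C' be non-negative integer n-vectors with |R| = |C| = |R'| = |C'|. If R' dominates R and C' dominates C, then |A_+(R,C)| ≥ |A_+(R',C')|. -/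
open Finset

/-- The set of `m × n` non-negative integer matrices with row sums `R` and column sums `C`. -/
def matAplus {m n : ℕ} (R : Fin m → ℕ) (C : Fin n → ℕ) : Set (Matrix (Fin m) (Fin n) ℕ) :=
  {D | (∀ i, ∑ j, D i j = R i) ∧ (∀ j, ∑ i, D i j = C j)}

/-!
Fix two rows `a ≠ b` and merge them into one row `c`. The tables with row sums `X` that lie over a
given merged table correspond to the vectors `y ≤ c` with `∑ y = X a`. As a function of `X a`,
their number is the coefficient sequence of `∏ⱼ (1 + t + ⋯ + t ^ cⱼ)`, which is symmetric and
unimodal about `|c| / 2`. So moving one unit from a row sum to a strictly smaller one never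
decreases the number of tables.

If `R'` dominates the non-increasing `R` and `R' ≠ R`, let `b` be the first row with `R' b < R b`,
and `a < b` a row with `R' a > R a`. Then `R' a - 1 ≥ R a ≥ R b > R' b`, so moving a unit from `a`
to `b` is such a move. It keeps `R'` dominating `R`, because the prefix sums of `R'` strictly
between `a` and `b` exceed those of `R`, and it lowers the sum of the prefix sums of `R'`. So `R`
is reached after finitely many moves. Transposing handles the columns.
-/

theorem apply_le_apply_of_add_le {f : ℕ → ℕ} {N : ℕ} (hsymm : ∀ r ≤ N, f r = f (N - r))
    (hmono : ∀ a b, a ≤ b → 2 * b ≤ N → f a ≤ f b) {a b : ℕ} (hab : a ≤ b) (hs : a + b ≤ N) :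
    f a ≤ f b := by
  rcases le_or_gt (2 * b) N with hb | hb
  · exact hmono a b hab hb
  · rw [hsymm b (by omega)]
    exact hmono a (N - b) (by omega) (by omega)

theorem sum_Icc_le_sum_Icc_add_one {f : ℕ → ℕ} {N c r : ℕ}
    (hf : ∀ a b, a ≤ b → a + b ≤ N → f a ≤ f b) (hr : 2 * (r + 1) ≤ N + c) :
    ∑ j ∈ Icc (r - c) r, f j ≤ ∑ j ∈ Icc (r + 1 - c) (r + 1), f j := by
  rcases lt_or_ge r c with h | h
  · rw [sum_Icc_succ_top (by omega), show r + 1 - c = r - c by omega]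
    exact Nat.le_add_right _ _
  · rw [sum_Icc_succ_top (by omega), Icc_eq_cons_Ioc (by omega : r - c ≤ r), sum_cons,
      ← Icc_add_one_left_eq_Ioc, show r + 1 - c = r - c + 1 by omega]
    have := hf (r - c) (r + 1) (by omega) (by omega)
    omega

-- `Fin.sum_univ_succ` with the tail written as `Fin.tail x`, so that `omega` matches the atoms.
theorem sum_eq_head_add_sum_tail {n : ℕ} (x : Fin (n + 1) → ℕ) :
    ∑ i, x i = x 0 + ∑ i, Fin.tail x i :=
  Fin.sum_univ_succ x

def boundedTuples {n : ℕ} (c : Fin n → ℕ) (r : ℕ) : Finset (Fin n → ℕ) :=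
  {x ∈ Iic c | ∑ j, x j = r}

theorem mem_boundedTuples {n r : ℕ} {c x : Fin n → ℕ} :
    x ∈ boundedTuples c r ↔ x ≤ c ∧ ∑ j, x j = r := by
  rw [boundedTuples, mem_filter, mem_Iic]

theorem card_boundedTuples_symm {n r : ℕ} (c : Fin n → ℕ) (hr : r ≤ ∑ j, c j) :
    #(boundedTuples c r) = #(boundedTuples c (∑ j, c j - r)) := by
  have hsub : ∀ x ≤ c, ∑ j, (c - x) j = ∑ j, c j - ∑ j, x j := fun x hx =>
    sum_tsub_distrib _ fun j _ => hx j
  refine card_nbij' (c - ·) (c - ·) ?_ ?_ ?_ ?_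
  · intro x hx
    rw [mem_coe, mem_boundedTuples] at hx ⊢
    exact ⟨tsub_le_self, by rw [hsub x hx.1, hx.2]⟩
  · intro x hx
    rw [mem_coe, mem_boundedTuples] at hx ⊢
    exact ⟨tsub_le_self, by rw [hsub x hx.1, hx.2]; omega⟩
  · intro x hx
    exact tsub_tsub_cancel_of_le (mem_boundedTuples.1 hx).1
  · intro x hx
    exact tsub_tsub_cancel_of_le (mem_boundedTuples.1 hx).1

theorem card_boundedTuples_succ {n : ℕ} (c : Fin (n + 1) → ℕ) (r : ℕ) :
    #(boundedTuples c r) = ∑ j ∈ Icc (r - c 0) r, #(boundedTuples (Fin.tail c) j) := by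
  have hmaps : ∀ x ∈ boundedTuples c r, ∑ i, Fin.tail x i ∈ Icc (r - c 0) r := by
    intro x hx
    obtain ⟨hle, hsum⟩ := mem_boundedTuples.1 hx
    rw [sum_eq_head_add_sum_tail] at hsum
    have : x 0 ≤ c 0 := hle 0
    rw [mem_Icc]
    omega
  rw [card_eq_sum_card_fiberwise hmaps]
  refine sum_congr rfl fun j hj => ?_
  rw [mem_Icc] at hj
  refine card_nbij' Fin.tail (fun y => Fin.cons (r - j) y) ?_ ?_ ?_ ?_
  · intro x hx
    simp only [mem_coe, mem_filter, mem_boundedTuples] at hx ⊢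
    exact ⟨fun i => hx.1.1 i.succ, hx.2⟩
  · intro y hy
    simp only [mem_coe, mem_filter, mem_boundedTuples] at hy ⊢
    refine ⟨⟨fun i => ?_, ?_⟩, ?_⟩
    · cases i using Fin.cases with
      | zero => simp only [Fin.cons_zero]; omega
      | succ i => exact hy.1 i
    · rw [sum_eq_head_add_sum_tail, Fin.tail_cons, Fin.cons_zero]; omega
    · simpa [Fin.tail] using hy.2
  · intro x hx
    simp only [mem_coe, mem_filter, mem_boundedTuples, sum_eq_head_add_sum_tail] at hx
    have : r - j = x 0 := by omega
    simp only [this, Fin.cons_self_tail]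
  · intro y _
    exact Fin.tail_cons _ _

theorem card_boundedTuples_le_of_add_le : ∀ {n : ℕ} (c : Fin n → ℕ) {a b : ℕ}, a ≤ b →
    a + b ≤ ∑ j, c j → #(boundedTuples c a) ≤ #(boundedTuples c b)
  | 0, c, a, b, hab, hs => by
    obtain rfl : a = b := by simp only [univ_eq_empty, sum_empty] at hs; omega
    rfl
  | n + 1, c, a, b, hab, hs => by
    refine apply_le_apply_of_add_le (f := fun r => #(boundedTuples c r))
      (fun r hr => card_boundedTuples_symm c hr) (fun a b hab hb => ?_) hab hs
    induction b, hab using Nat.le_induction with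
    | base => rfl
    | succ b hab ih =>
      have hN : 2 * (b + 1) ≤ ∑ j, Fin.tail c j + c 0 := by
        rw [sum_eq_head_add_sum_tail] at hb; omega
      refine (ih (by omega)).trans ?_
      simp only [card_boundedTuples_succ]
      exact sum_Icc_le_sum_Icc_add_one
        (fun a b => card_boundedTuples_le_of_add_le (Fin.tail c)) hN

section mergeRows

variable {ι α : Type*} [DecidableEq ι] {a b : ι}

def mergeRows [Add α] [Zero α] (a b : ι) (f : ι → α) : ι → α :=
  Function.update (Function.update f a (f a + f b)) b 0

section apply

variable [Add α] [Zero α]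

theorem mergeRows_apply_left (hab : a ≠ b) (f : ι → α) : mergeRows a b f a = f a + f b := by
  simp [mergeRows, hab]

@[simp]
theorem mergeRows_apply_right (f : ι → α) : mergeRows a b f b = 0 := by
  simp [mergeRows]

theorem mergeRows_apply_of_ne {i : ι} (hia : i ≠ a) (hib : i ≠ b) (f : ι → α) :
    mergeRows a b f i = f i := by
  simp [mergeRows, hia, hib]

end apply

theorem mergeRows_apply_apply [AddCommMonoid α] {κ : Type*} (f : ι → κ → α) (i : ι) (j : κ) :
    mergeRows a b f i j = mergeRows a b (fun i => f i j) i := by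
  simp only [mergeRows, Function.update_apply]
  split_ifs <;> rfl

theorem sum_mergeRows [AddCommMonoid α] [Fintype ι] (hab : a ≠ b) (f : ι → α) :
    ∑ i, mergeRows a b f i = ∑ i, f i := by
  rw [mergeRows, sum_update_of_mem (mem_univ b), zero_add, sum_update_of_mem (by simp [hab]),
    ← add_sum_erase univ f (mem_univ a), ← add_sum_erase _ f (mem_erase.2 ⟨hab.symm, mem_univ b⟩),
    ← add_assoc, sdiff_singleton_eq_erase, sdiff_singleton_eq_erase, erase_right_comm]

end mergeRows

def tables {m n : ℕ} (R : Fin m → ℕ) (C : Fin n → ℕ) : Finset (Fin m → Fin n → ℕ) :=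
  {D ∈ Iic fun _ => C | (∀ i, ∑ j, D i j = R i) ∧ ∀ j, ∑ i, D i j = C j}

def splitRow {m n : ℕ} (a b : Fin m) (E : Fin m → Fin n → ℕ) (x : Fin n → ℕ) :
    Fin m → Fin n → ℕ :=
  Function.update (Function.update E a x) b (E a - x)

section tables

variable {m n : ℕ} {R X : Fin m → ℕ} {C : Fin n → ℕ} {D E : Fin m → Fin n → ℕ} {a b : Fin m}

theorem mem_tables : D ∈ tables R C ↔ (∀ i, ∑ j, D i j = R i) ∧ ∀ j, ∑ i, D i j = C j := by
  rw [tables, mem_filter, mem_Iic, and_iff_right_iff_imp]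
  rintro ⟨-, hcol⟩ i j
  rw [show (fun _ => C) i j = C j from rfl, ← hcol j]
  exact single_le_sum (f := fun i => D i j) (fun _ _ => Nat.zero_le _) (mem_univ i)

theorem ncard_matAplus : (matAplus R C).ncard = #(tables R C) := by
  rw [← Set.ncard_coe_finset]
  congr 1
  ext D
  exact mem_tables.symm

theorem card_tables_comm (R : Fin m → ℕ) (C : Fin n → ℕ) : #(tables R C) = #(tables C R) := by
  refine card_nbij' (fun D j i => D i j) (fun D i j => D j i) ?_ ?_
    (fun _ _ => rfl) (fun _ _ => rfl)
  all_goals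
    intro D hD
    rw [mem_coe, mem_tables] at hD ⊢
    exact hD.symm

theorem sum_mergeRows_apply (hab : a ≠ b) (D : Fin m → Fin n → ℕ) (i : Fin m) :
    ∑ j, mergeRows a b D i j = mergeRows a b (fun i => ∑ j, D i j) i := by
  by_cases hib : i = b
  · simp [hib]
  by_cases hia : i = a
  · simp [hia, mergeRows_apply_left hab, sum_add_distrib]
  · simp [mergeRows_apply_of_ne hia hib]

theorem mergeRows_mem_tables (hab : a ≠ b) (hD : D ∈ tables X C) :
    mergeRows a b D ∈ tables (mergeRows a b X) C := by
  rw [mem_tables] at hD ⊢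
  refine ⟨fun i => ?_, fun j => ?_⟩
  · rw [sum_mergeRows_apply hab]
    simp only [hD.1]
  · simp only [mergeRows_apply_apply D _ j, sum_mergeRows hab, hD.2]

theorem apply_mem_boundedTuples (hab : a ≠ b) (hD : D ∈ tables X C) :
    D a ∈ boundedTuples (mergeRows a b D a) (X a) := by
  rw [mem_boundedTuples, mergeRows_apply_left hab]
  exact ⟨le_self_add, (mem_tables.1 hD).1 a⟩

theorem eq_zero_of_mem_tables_mergeRows (hE : E ∈ tables (mergeRows a b X) C) : E b = 0 := by
  have h := (mem_tables.1 hE).1 b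
  rw [mergeRows_apply_right, sum_eq_zero_iff] at h
  exact funext fun j => h j (mem_univ j)

theorem splitRow_apply_left (hab : a ≠ b) (E : Fin m → Fin n → ℕ) (x : Fin n → ℕ) :
    splitRow a b E x a = x := by
  simp [splitRow, hab]

theorem splitRow_apply_right (E : Fin m → Fin n → ℕ) (x : Fin n → ℕ) :
    splitRow a b E x b = E a - x := by
  simp [splitRow]

theorem splitRow_apply_of_ne {i : Fin m} (hia : i ≠ a) (hib : i ≠ b) (E : Fin m → Fin n → ℕ)
    (x : Fin n → ℕ) : splitRow a b E x i = E i := by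
  simp [splitRow, hia, hib]

theorem mergeRows_splitRow (hab : a ≠ b) {x : Fin n → ℕ} (hx : x ≤ E a) (hEb : E b = 0) :
    mergeRows a b (splitRow a b E x) = E := by
  ext i : 1
  by_cases hib : i = b
  · simp [hib, hEb]
  by_cases hia : i = a
  · rw [hia, mergeRows_apply_left hab, splitRow_apply_left hab, splitRow_apply_right,
      add_tsub_cancel_of_le hx]
  · rw [mergeRows_apply_of_ne hia hib, splitRow_apply_of_ne hia hib]

theorem splitRow_mergeRows (hab : a ≠ b) (D : Fin m → Fin n → ℕ) :
    splitRow a b (mergeRows a b D) (D a) = D := by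
  ext i : 1
  by_cases hia : i = a
  · rw [hia, splitRow_apply_left hab]
  by_cases hib : i = b
  · rw [hib, splitRow_apply_right, mergeRows_apply_left hab, add_tsub_cancel_left]
  · rw [splitRow_apply_of_ne hia hib, mergeRows_apply_of_ne hia hib]

theorem splitRow_mem_tables (hab : a ≠ b) (hE : E ∈ tables (mergeRows a b X) C)
    {x : Fin n → ℕ} (hx : x ∈ boundedTuples (E a) (X a)) : splitRow a b E x ∈ tables X C := by
  obtain ⟨hxle, hxsum⟩ := mem_boundedTuples.1 hx
  have hsplit := mergeRows_splitRow hab hxle (eq_zero_of_mem_tables_mergeRows hE)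
  rw [mem_tables] at hE ⊢
  refine ⟨fun i => ?_, fun j => ?_⟩
  · by_cases hia : i = a
    · rw [hia, splitRow_apply_left hab, hxsum]
    by_cases hib : i = b
    · rw [hib, splitRow_apply_right, Pi.sub_def, sum_tsub_distrib _ fun j _ => hxle j, hE.1,
        mergeRows_apply_left hab, hxsum, add_tsub_cancel_left]
    · rw [splitRow_apply_of_ne hia hib, hE.1, mergeRows_apply_of_ne hia hib]
  · rw [← sum_mergeRows hab, ← hE.2 j]
    simp only [← mergeRows_apply_apply, hsplit]

theorem card_fiber_mergeRows (hab : a ≠ b) (hE : E ∈ tables (mergeRows a b X) C) :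
    #{D ∈ tables X C | mergeRows a b D = E} = #(boundedTuples (E a) (X a)) := by
  refine card_nbij' (· a) (splitRow a b E) ?_ ?_ ?_ ?_
  · intro D hD
    obtain ⟨hDX, rfl⟩ := mem_filter.1 hD
    exact apply_mem_boundedTuples hab hDX
  · intro x hx
    exact mem_filter.2 ⟨splitRow_mem_tables hab hE hx,
      mergeRows_splitRow hab (mem_boundedTuples.1 hx).1 (eq_zero_of_mem_tables_mergeRows hE)⟩
  · intro D hD
    obtain ⟨-, rfl⟩ := mem_filter.1 hD
    exact splitRow_mergeRows hab D
  · intro x _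
    exact splitRow_apply_left hab E x

theorem card_tables_eq_sum (hab : a ≠ b) :
    #(tables X C) = ∑ E ∈ tables (mergeRows a b X) C, #(boundedTuples (E a) (X a)) := by
  rw [card_eq_sum_card_fiberwise fun D hD => mergeRows_mem_tables hab hD]
  exact sum_congr rfl fun E hE => card_fiber_mergeRows hab hE

theorem card_tables_add_single_le (C : Fin n → ℕ) {Y : Fin m → ℕ} (h : Y b < Y a) :
    #(tables (Y + Pi.single a 1) C) ≤ #(tables (Y + Pi.single b 1) C) := by
  have hab : a ≠ b := by
    rintro rfl
    exact lt_irrefl _ h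
  have hmerge : mergeRows a b (Y + Pi.single a 1) = mergeRows a b (Y + Pi.single b 1) := by
    ext i
    by_cases hib : i = b
    · simp [hib]
    by_cases hia : i = a
    · simp only [hia, mergeRows_apply_left hab, Pi.add_apply, Pi.single_eq_same,
        Pi.single_eq_of_ne hab, Pi.single_eq_of_ne hab.symm, add_zero]
      omega
    · simp [mergeRows_apply_of_ne hia hib, hia, hib]
  rw [card_tables_eq_sum hab, card_tables_eq_sum hab, hmerge]
  refine sum_le_sum fun E hE => ?_
  have hN : ∑ j, E a j = Y a + Y b + 1 := by
    rw [(mem_tables.1 hE).1, mergeRows_apply_left hab]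
    simp only [Pi.add_apply, Pi.single_eq_of_ne hab, Pi.single_eq_same, add_zero]
    omega
  simp only [Pi.add_apply, Pi.single_eq_same, Pi.single_eq_of_ne hab, add_zero]
  calc #(boundedTuples (E a) (Y a + 1)) = #(boundedTuples (E a) (Y b)) := by
        rw [card_boundedTuples_symm _ (by omega), hN]
        congr 2
        omega
    _ ≤ #(boundedTuples (E a) (Y a)) := card_boundedTuples_le_of_add_le _ h.le (by omega)

end tables

def prefixSum {p : ℕ} (X : Fin p → ℕ) (k : ℕ) : ℕ :=
  ∑ i ∈ univ.filter (fun i : Fin p => (i : ℕ) < k), X i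

section majorization

variable {p : ℕ} {R X Y : Fin p → ℕ} {a b : Fin p}

theorem dominates_iff : Dominates X R ↔
    (∀ k ≤ p, prefixSum R k ≤ prefixSum X k) ∧ ∑ i, X i = ∑ i, R i :=
  Iff.rfl

theorem prefixSum_add_single (Y : Fin p → ℕ) (a : Fin p) (k : ℕ) :
    prefixSum (Y + Pi.single a 1) k = prefixSum Y k + if (a : ℕ) < k then 1 else 0 := by
  simp [prefixSum, sum_add_distrib, sum_pi_single']

theorem prefixSum_succ (X : Fin p → ℕ) (t : Fin p) :
    prefixSum X (t + 1) = prefixSum X t + X t := by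
  have : univ.filter (fun i : Fin p => (i : ℕ) < t + 1) =
      insert t (univ.filter fun i : Fin p => (i : ℕ) < t) := by
    ext i
    simp only [mem_filter, mem_univ, true_and, mem_insert, Nat.lt_succ_iff_lt_or_eq, Fin.val_inj]
    tauto
  rw [prefixSum, this, sum_insert (by simp), add_comm, prefixSum]

theorem prefixSum_lt_prefixSum (hRa : R a < X a) (hbelow : ∀ i < b, R i ≤ X i) {k : ℕ}
    (hak : a < k) (hkb : k ≤ b) : prefixSum R k < prefixSum X k := by
  refine sum_lt_sum (fun i hi => hbelow i ?_) ⟨a, by simpa using hak, hRa⟩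
  rw [mem_filter] at hi
  exact Fin.lt_def.2 (lt_of_lt_of_le hi.2 hkb)

theorem exists_lt_of_dominates (h : Dominates X R) (hne : X ≠ R) :
    ∃ a b, a < b ∧ R a < X a ∧ X b < R b ∧ ∀ i < b, R i ≤ X i := by
  have hlt : (univ.filter fun i => X i < R i).Nonempty := by
    by_contra! hge
    refine hne (funext fun i => ?_)
    have hle (i : Fin p) (_ : i ∈ univ) : R i ≤ X i := by
      simpa using filter_eq_empty_iff.1 hge (mem_univ i)
    exact ((sum_eq_sum_iff_of_le hle).1 h.2.symm i (mem_univ i)).symm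
  obtain ⟨b, hb, hbmin⟩ := exists_min_image _ id hlt
  rw [mem_filter] at hb
  have hbelow (i : Fin p) (hi : i < b) : R i ≤ X i := by
    by_contra! hXR
    exact absurd (hbmin i (mem_filter.2 ⟨mem_univ i, hXR⟩)) (not_le.2 hi)
  have hprefix : prefixSum R b < prefixSum X b := by
    have := (dominates_iff.1 h).1 (b + 1) b.isLt
    rw [prefixSum_succ, prefixSum_succ] at this
    omega
  obtain ⟨a, ha, hRa⟩ := exists_lt_of_sum_lt hprefix
  rw [mem_filter] at ha
  exact ⟨a, b, ha.2, hRa, hb.2, hbelow⟩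

theorem dominates_add_single (hab : a < b) (h : Dominates (Y + Pi.single a 1) R)
    (hstrict : ∀ k : ℕ, a < k → k ≤ b → prefixSum R k < prefixSum (Y + Pi.single a 1) k) :
    Dominates (Y + Pi.single b 1) R := by
  rw [dominates_iff] at h ⊢
  refine ⟨fun k hk => ?_, ?_⟩
  · have hRk := h.1 k hk
    rw [prefixSum_add_single] at hRk ⊢
    by_cases hk' : (a : ℕ) < k ∧ k ≤ b
    · have := hstrict k hk'.1 hk'.2
      rw [prefixSum_add_single] at this
      split_ifs at this ⊢ <;> omega
    · have : (a : ℕ) < b := hab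
      split_ifs at hRk ⊢ <;> omega
  · rw [← h.2]
    simp [sum_add_distrib]

theorem sum_prefixSum_add_single_lt (hab : a < b) :
    ∑ k ∈ range (p + 1), prefixSum (Y + Pi.single b 1) k <
      ∑ k ∈ range (p + 1), prefixSum (Y + Pi.single a 1) k := by
  have hab' : (a : ℕ) < b := hab
  refine sum_lt_sum (fun k _ => ?_) ⟨b, by simp, ?_⟩
  all_goals
    simp only [prefixSum_add_single]
    split_ifs <;> omega

end majorization

theorem card_tables_le_of_dominates {m n : ℕ} (C : Fin n → ℕ) {R : Fin m → ℕ} (hR : Antitone R)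
    (X : Fin m → ℕ) (h : Dominates X R) : #(tables X C) ≤ #(tables R C) := by
  by_cases hXR : X = R
  · rw [hXR]
  obtain ⟨a, b, hab, hRa, hXb, hbelow⟩ := exists_lt_of_dominates h hXR
  obtain ⟨Y, hX⟩ : ∃ Y, Y + Pi.single a 1 = X :=
    ⟨Function.update X a (X a - 1), by ext i; by_cases hi : i = a <;> simp [hi]; omega⟩
  subst hX
  have hYab : Y b < Y a := by
    have := hR hab.le
    simp only [Pi.add_apply, Pi.single_eq_same, Pi.single_eq_of_ne hab.ne'] at hRa hXb
    omega
  have hdom := dominates_add_single hab h fun k hak hkb =>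
    prefixSum_lt_prefixSum hRa hbelow hak hkb
  exact (card_tables_add_single_le C hYab).trans (card_tables_le_of_dominates C hR _ hdom)
termination_by ∑ k ∈ range (m + 1), prefixSum X k
decreasing_by exact hX ▸ sum_prefixSum_add_single_lt hab

theorem stmt7_general (m n : ℕ) (R R' : Fin m → ℕ) (C C' : Fin n → ℕ)
    (hRmono : Antitone R)
    (hCmono : Antitone C)
    (hdomR : Dominates R' R) (hdomC : Dominates C' C) :
    (matAplus R' C').ncard ≤ (matAplus R C).ncard := by
  rw [ncard_matAplus, ncard_matAplus]
  calc #(tables R' C') ≤ #(tables R C') := card_tables_le_of_dominates C' hRmono R' hdomR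
    _ = #(tables C' R) := card_tables_comm R C'
    _ ≤ #(tables C R) := card_tables_le_of_dominates R hCmono C' hdomC
    _ = #(tables R C) := card_tables_comm C R

theorem stmt7 (m n : ℕ) (R R' : Fin m → ℕ) (C C' : Fin n → ℕ)
    (hRmono : Antitone R) (hR'mono : Antitone R')
    (hCmono : Antitone C) (hC'mono : Antitone C')
    (hbal : ∑ i, R i = ∑ j, C j) (hbal' : ∑ i, R' i = ∑ j, C' j)
    (hRR' : ∑ i, R i = ∑ i, R' i)
    (hdomR : Dominates R' R) (hdomC : Dominates C' C) :
    (matAplus R' C').ncard ≤ (matAplus R C).ncard :=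
  stmt7_general m n R R' C C' hRmono hCmono hdomR hdomC
end

section
/- Let R=(r_1,…,r_m) and C=(c_1,…,c_n) be positive integer vectors with r_1+…+r_m = c_1+…+c_n, and let P_0(R,C) be the polytope of all m×n real matrices X=(x_{ij}) with row sums R, column sums C and 0 ≤ x_{ij} ≤ 1 for all i,j. Suppose P_0(R,C) contains a matrix Y=(y_{ij}) with 0 < y_{ij} < 1 for all i,j. Define h: P_0(R,C) → ℝ by h(X) = Σ_{i,j} [ x_{ij} ln(1/x_{ij}) + (1-x_{ij}) ln(1/(1-x_{ij})) ]. Then h is strictly concave on P_0(R,C), hence attains its maximum at a unique matrix Z_0 = (z_{ij}) (the maximum entropy matrix), and moreover: (1) 0 < z_{ij} < 1 for all i,j; (2) the infimum α_0(R,C) of F_0 over positive x,y is attained at some point (x,y); (3) α_0(R,C) = e^{h(Z_0)}. -/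
open Finset

/-- `F_0(x, y) = (∏ᵢ xᵢ^{-rᵢ}) (∏ⱼ yⱼ^{-cⱼ}) ∏_{i,j} (1 + xᵢ yⱼ)`. -/
noncomputable def F0 {m n : ℕ} (R : Fin m → ℕ) (C : Fin n → ℕ)
    (x : Fin m → ℝ) (y : Fin n → ℝ) : ℝ :=
  (∏ i, x i ^ (-(R i : ℤ))) * (∏ j, y j ^ (-(C j : ℤ))) * ∏ i, ∏ j, (1 + x i * y j)

/-- `α_0(R, C) = inf { F_0(x, y) : xᵢ > 0, yⱼ > 0 }`. -/
noncomputable def alpha0 {m n : ℕ} (R : Fin m → ℕ) (C : Fin n → ℕ) : ℝ :=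
  sInf {z | ∃ x y, (∀ i, 0 < x i) ∧ (∀ j, 0 < y j) ∧ z = F0 R C x y}

/-- The polytope of `m × n` real matrices with row sums `R`, column sums `C` and
entries in `[0, 1]`. -/
def P0 {m n : ℕ} (R : Fin m → ℕ) (C : Fin n → ℕ) : Set (Matrix (Fin m) (Fin n) ℝ) :=
  {X | (∀ i j, 0 ≤ X i j ∧ X i j ≤ 1) ∧ (∀ i, ∑ j, X i j = R i) ∧ (∀ j, ∑ i, X i j = C j)}

/-- The entropy `h(X) = Σ_{i,j} [x_{ij} ln(1/x_{ij}) + (1 - x_{ij}) ln(1/(1 - x_{ij}))]`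
(with the convention `0 · ln(1/0) = 0`, which holds since `Real.log 0 = 0`). -/
noncomputable def entH {m n : ℕ} (X : Matrix (Fin m) (Fin n) ℝ) : ℝ :=
  ∑ i, ∑ j, (X i j * Real.log (1 / X i j) + (1 - X i j) * Real.log (1 / (1 - X i j)))

open Real Filter Topology

/-!
Using the row and column sums of `X ∈ P0 R C`,
`log F0(x, y) = Σ [log (1 + xᵢ yⱼ) - x_{ij} log (xᵢ yⱼ)]`, and Gibbs' inequality
`H(a) ≤ log (1 + t) - a log t` for the binary entropy `H`, with equality at `t = a / (1 - a)`,
gives `h(X) ≤ log F0(x, y)`. The entropy is strictly concave and continuous on the compact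
polytope, so it has a unique maximiser `Z0`. Since `H'(0⁺) = +∞`, moving from a boundary
point towards the interior point `Y` increases `h`, so `Z0` is interior; the first-order
conditions along the directions `(eᵢ - eᵢ')(eⱼ - eⱼ')ᵀ` say that the log-odds
`log (z_{ij} / (1 - z_{ij}))` have the form `aᵢ + bⱼ`, and then `x = exp a`, `y = exp b`
attains `α_0 = exp h(Z0)`.
-/

lemma negMulLog_le_neg_mul_log_add_sub {u v : ℝ} (hu : 0 < u) (hv : 0 ≤ v) :
    negMulLog v ≤ -v * log u + u - v := by
  have h := negMulLog_le_one_sub_self (div_nonneg hv hu.le)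
  have hnn : 0 ≤ v / u := div_nonneg hv hu.le
  calc negMulLog v = negMulLog (u * (v / u)) := by rw [mul_div_cancel₀ _ hu.ne']
    _ = v / u * (-u * log u) + u * negMulLog (v / u) := by rw [negMulLog_mul, negMulLog]
    _ ≤ v / u * (-u * log u) + u * (1 - v / u) := by gcongr
    _ = -v * log u + u - v := by field_simp; ring

lemma binEntropy_le_log_one_add_sub_mul_log {a t : ℝ} (ha₀ : 0 ≤ a) (ha₁ : a ≤ 1) (ht : 0 < t) :
    binEntropy a ≤ log (1 + t) - a * log t := by
  have h1t : 0 < 1 + t := by linarith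
  have hp := negMulLog_le_neg_mul_log_add_sub (div_pos ht h1t) ha₀
  have hq := negMulLog_le_neg_mul_log_add_sub (inv_pos.2 h1t) (sub_nonneg.2 ha₁)
  rw [log_div ht.ne' h1t.ne'] at hp
  rw [log_inv] at hq
  rw [binEntropy_eq_negMulLog_add_negMulLog_one_sub]
  have hsum : t / (1 + t) + (1 + t)⁻¹ = 1 := by field_simp; ring
  nlinarith

lemma binEntropy_eq_log_one_add_sub_mul_log {z : ℝ} (hz : z ∈ Set.Ioo 0 1) :
    binEntropy z = log (1 + z / (1 - z)) - z * log (z / (1 - z)) := by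
  obtain ⟨h₀, h₁⟩ := hz
  have h1z : 0 < 1 - z := by linarith
  have e : 1 + z / (1 - z) = (1 - z)⁻¹ := by field_simp; ring
  rw [e, log_inv, log_div h₀.ne' h1z.ne', binEntropy, log_inv, log_inv]
  ring

lemma mul_negMulLog_le_binEntropy_mul {t s : ℝ} (ht₀ : 0 < t) (ht₁ : t ≤ 1) (hs : s ∈ Set.Icc 0 1) :
    s * negMulLog t ≤ binEntropy (t * s) := by
  have hts : t * s ≤ 1 := by nlinarith [hs.1, hs.2]
  rw [binEntropy_eq_negMulLog_add_negMulLog_one_sub, negMulLog_mul]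
  have := negMulLog_nonneg hs.1 hs.2
  have := negMulLog_nonneg (sub_nonneg.2 hts) (by nlinarith [hs.1])
  nlinarith

lemma binEntropy_sub_le_binEntropy_lineMap {z y t : ℝ} (hz : z ∈ Set.Icc 0 1)
    (hy : y ∈ Set.Icc 0 1) (ht₀ : 0 ≤ t) (ht₁ : t ≤ 1) :
    binEntropy z - t * log 2 ≤ binEntropy ((1 - t) * z + t * y) := by
  have h := strictConcave_binEntropy.concaveOn.2 hz hy (sub_nonneg.2 ht₁) ht₀ (by ring)
  simp only [smul_eq_mul] at h
  nlinarith [binEntropy_nonneg hy.1 hy.2, binEntropy_le_log_two (p := z)]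

lemma exists_binEntropy_lineMap_eq_mul {z y : ℝ} (hz : z ∈ Set.Icc 0 1) (hz' : z ∉ Set.Ioo 0 1)
    (hy : y ∈ Set.Ioo 0 1) :
    ∃ s ∈ Set.Ioo (0 : ℝ) 1, ∀ t, binEntropy ((1 - t) * z + t * y) = binEntropy (t * s) := by
  rcases hz.1.eq_or_lt with rfl | h₀
  · exact ⟨y, hy, fun t => by ring_nf⟩
  obtain rfl : z = 1 := le_antisymm hz.2 (not_lt.1 fun h₁ => hz' ⟨h₀, h₁⟩)
  refine ⟨1 - y, ⟨by linarith [hy.2], by linarith [hy.1]⟩, fun t => ?_⟩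
  rw [← binEntropy_one_sub]
  ring_nf

lemma exists_add_of_add_eq_add {α β G : Type*} [AddCommGroup G] {g : α → β → G}
    (h : ∀ i i' j j', g i j + g i' j' = g i j' + g i' j) :
    ∃ (a : α → G) (b : β → G), ∀ i j, g i j = a i + b j := by
  rcases isEmpty_or_nonempty α with hα | ⟨⟨i₀⟩⟩
  · exact ⟨0, 0, fun i => isEmptyElim i⟩
  rcases isEmpty_or_nonempty β with hβ | ⟨⟨j₀⟩⟩
  · exact ⟨0, 0, fun _ j => isEmptyElim j⟩
  refine ⟨fun i => g i j₀ - g i₀ j₀, fun j => g i₀ j, fun i j => ?_⟩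
  rw [sub_add_eq_add_sub, ← h i i₀ j j₀, add_sub_cancel_right]

section Entropy

variable {m n : ℕ}

lemma entH_eq_sum_binEntropy (X : Matrix (Fin m) (Fin n) ℝ) :
    entH X = ∑ i, ∑ j, binEntropy (X i j) := by
  simp [entH, binEntropy, one_div]

lemma continuous_entH : Continuous (entH : Matrix (Fin m) (Fin n) ℝ → ℝ) := by
  rw [funext entH_eq_sum_binEntropy]
  have := binEntropy_continuous
  fun_prop

lemma strictConcaveOn_entH {S : Set (Matrix (Fin m) (Fin n) ℝ)} (hS : Convex ℝ S)
    (hS₀₁ : ∀ X ∈ S, ∀ i j, X i j ∈ Set.Icc 0 1) : StrictConcaveOn ℝ S entH := by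
  refine ⟨hS, fun X hX Y hY hXY a b ha hb hab => ?_⟩
  obtain ⟨i₀, j₀, hne⟩ : ∃ i j, X i j ≠ Y i j := by
    by_contra! h
    exact hXY (Matrix.ext h)
  have hle : ∀ i j, a * binEntropy (X i j) + b * binEntropy (Y i j)
      ≤ binEntropy (a * X i j + b * Y i j) := fun i j =>
    strictConcave_binEntropy.concaveOn.2 (hS₀₁ X hX i j) (hS₀₁ Y hY i j) ha.le hb.le hab
  have hlt : a * binEntropy (X i₀ j₀) + b * binEntropy (Y i₀ j₀)
      < binEntropy (a * X i₀ j₀ + b * Y i₀ j₀) :=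
    strictConcave_binEntropy.2 (hS₀₁ X hX i₀ j₀) (hS₀₁ Y hY i₀ j₀) hne ha hb hab
  simp only [entH_eq_sum_binEntropy, smul_eq_mul, Matrix.add_apply, Matrix.smul_apply, mul_sum,
    ← sum_add_distrib]
  exact sum_lt_sum (fun i _ => sum_le_sum fun j _ => hle i j)
    ⟨i₀, mem_univ _, sum_lt_sum (fun j _ => hle i₀ j) ⟨j₀, mem_univ _, hlt⟩⟩

lemma mem_Ioo_of_isMaxOn_entH {S : Set (Matrix (Fin m) (Fin n) ℝ)} (hS : Convex ℝ S)
    (hS₀₁ : ∀ X ∈ S, ∀ i j, X i j ∈ Set.Icc 0 1) {Y Z : Matrix (Fin m) (Fin n) ℝ} (hY : Y ∈ S)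
    (hYint : ∀ i j, Y i j ∈ Set.Ioo 0 1) (hZ : Z ∈ S) (hmax : IsMaxOn entH S Z) (i : Fin m)
    (j : Fin n) : Z i j ∈ Set.Ioo 0 1 := by
  by_contra hij
  obtain ⟨s, hs, hWs⟩ := exists_binEntropy_lineMap_eq_mul (hS₀₁ Z hZ i j) hij (hYint i j)
  have hZij : binEntropy (Z i j) = 0 := by
    rcases (hS₀₁ Z hZ i j).1.eq_or_lt with h | h
    · simp [← h]
    · simp [le_antisymm (hS₀₁ Z hZ i j).2 (not_lt.1 fun h' => hij ⟨h, h'⟩)]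
  -- moving from `Z` towards `Y` by `t` costs at most `t log 2` per entry, but gains
  -- `s t log (1/t)` at the boundary entry `(i, j)`; choose `t` with `s log (1/t) = K`
  set K : ℝ := m * n * log 2 + 1
  have hK : 0 < K := by positivity
  set t := exp (-(K / s))
  have ht₀ : 0 < t := exp_pos _
  have ht₁ : t < 1 := exp_lt_one_iff.2 (neg_neg_of_pos (div_pos hK hs.1))
  have hst : s * negMulLog t = t * K := by
    rw [negMulLog, log_exp]; field_simp [hs.1.ne']
  set W : Matrix (Fin m) (Fin n) ℝ := (1 - t) • Z + t • Y
  have hW : W ∈ S := hS hZ hY (by linarith) ht₀.le (by ring)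
  have hWpq : ∀ p q, W p q = (1 - t) * Z p q + t * Y p q := fun p q => by simp [W]
  set gain : Fin m → Fin n → ℝ := fun p q => binEntropy (W p q) - binEntropy (Z p q) + t * log 2
  have hgain : ∀ p q, 0 ≤ gain p q := fun p q => by
    have := binEntropy_sub_le_binEntropy_lineMap (hS₀₁ Z hZ p q) (hS₀₁ Y hY p q) ht₀.le ht₁.le
    simp only [gain, hWpq]
    linarith
  have hgain_ij : t * K ≤ gain i j := by
    have := mul_negMulLog_le_binEntropy_mul ht₀ ht₁.le (Set.Ioo_subset_Icc_self hs)
    simp only [gain, hWpq, hWs, hZij]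
    nlinarith [log_pos (one_lt_two : (1 : ℝ) < 2)]
  have hsum : ∑ p, ∑ q, gain p q = entH W - entH Z + m * n * (t * log 2) := by
    simp [gain, entH_eq_sum_binEntropy, sum_add_distrib, sum_sub_distrib]
    ring
  have hle : gain i j ≤ ∑ p, ∑ q, gain p q :=
    (single_le_sum (fun q _ => hgain i q) (mem_univ j)).trans
      (single_le_sum (fun p _ => sum_nonneg fun q _ => hgain p q) (mem_univ i))
  have : entH W ≤ entH Z := hmax hW
  nlinarith

lemma hasDerivAt_entH_add_smul {Z : Matrix (Fin m) (Fin n) ℝ} (hZ : ∀ i j, Z i j ∈ Set.Ioo 0 1)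
    (D : Matrix (Fin m) (Fin n) ℝ) :
    HasDerivAt (fun ε : ℝ => entH (Z + ε • D))
      (∑ i, ∑ j, (log (1 - Z i j) - log (Z i j)) * D i j) 0 := by
  simp only [entH_eq_sum_binEntropy, Matrix.add_apply, Matrix.smul_apply, smul_eq_mul]
  refine HasDerivAt.fun_sum fun i _ => HasDerivAt.fun_sum fun j _ => ?_
  have hline : HasDerivAt (fun ε : ℝ => Z i j + ε * D i j) (D i j) 0 := by
    simpa using ((hasDerivAt_id (0 : ℝ)).mul_const (D i j)).const_add (Z i j)
  have hbin := hasDerivAt_binEntropy (hZ i j).1.ne' (sub_ne_zero.1 (sub_pos.2 (hZ i j).2).ne').symm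
  exact hbin.comp_of_eq 0 hline (by simp)

variable (R : Fin m → ℕ) (C : Fin n → ℕ)

lemma convex_P0 : Convex ℝ (P0 R C) := by
  intro X hX Y hY a b ha hb hab
  refine ⟨fun i j => ?_, fun i => ?_, fun j => ?_⟩ <;>
    simp only [Matrix.add_apply, Matrix.smul_apply, smul_eq_mul, sum_add_distrib, ← mul_sum]
  · obtain ⟨⟨hX₀, hX₁⟩, ⟨hY₀, hY₁⟩⟩ := And.intro (hX.1 i j) (hY.1 i j)
    constructor <;> nlinarith
  · rw [hX.2.1 i, hY.2.1 i, ← add_mul, hab, one_mul]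
  · rw [hX.2.2 j, hY.2.2 j, ← add_mul, hab, one_mul]

lemma isCompact_P0 : IsCompact (P0 R C) := by
  refine (isCompact_univ_pi fun _ => isCompact_univ_pi fun _ => isCompact_Icc).of_isClosed_subset
    ?_ fun X hX i _ j _ => hX.1 i j
  simp only [P0, Set.ofPred_and, Set.ofPred_forall]
  refine (isClosed_iInter fun i => isClosed_iInter fun j => ?_).inter
    ((isClosed_iInter fun i => ?_).inter (isClosed_iInter fun j => ?_))
  · exact (isClosed_le continuous_const (by fun_prop)).inter
      (isClosed_le (by fun_prop) continuous_const)
  · exact isClosed_eq (by fun_prop) continuous_const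
  · exact isClosed_eq (by fun_prop) continuous_const

lemma sum_mul_eq_zero_of_isMaxOn_P0 {Z : Matrix (Fin m) (Fin n) ℝ} (hZ : Z ∈ P0 R C)
    (hmax : IsMaxOn entH (P0 R C) Z) (hZint : ∀ i j, Z i j ∈ Set.Ioo 0 1)
    {D : Matrix (Fin m) (Fin n) ℝ} (hDrow : ∀ i, ∑ j, D i j = 0) (hDcol : ∀ j, ∑ i, D i j = 0) :
    ∑ i, ∑ j, (log (1 - Z i j) - log (Z i j)) * D i j = 0 := by
  refine IsLocalMax.hasDerivAt_eq_zero ?_ (hasDerivAt_entH_add_smul hZint D)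
  have hbox : ∀ᶠ ε in 𝓝 (0 : ℝ), ∀ i j, Z i j + ε * D i j ∈ Set.Icc 0 1 := by
    refine eventually_all.2 fun i => eventually_all.2 fun j => ?_
    have hcont : Continuous fun ε : ℝ => Z i j + ε * D i j := by fun_prop
    have hlim : Tendsto (fun ε : ℝ => Z i j + ε * D i j) (𝓝 0) (𝓝 (Z i j)) := by
      simpa using hcont.tendsto 0
    exact hlim.eventually (Icc_mem_nhds (hZint i j).1 (hZint i j).2)
  filter_upwards [hbox] with ε hε
  simp only [zero_smul, add_zero]
  refine hmax ⟨hε, fun i => ?_, fun j => ?_⟩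
  · simp [sum_add_distrib, ← mul_sum, hDrow, hZ.2.1 i]
  · simp [sum_add_distrib, ← mul_sum, hDcol, hZ.2.2 j]

lemma exists_log_odds_eq_add_of_isMaxOn_P0 {Z : Matrix (Fin m) (Fin n) ℝ} (hZ : Z ∈ P0 R C)
    (hmax : IsMaxOn entH (P0 R C) Z) (hZint : ∀ i j, Z i j ∈ Set.Ioo 0 1) :
    ∃ (a : Fin m → ℝ) (b : Fin n → ℝ), ∀ i j, log (Z i j / (1 - Z i j)) = a i + b j := by
  refine exists_add_of_add_eq_add fun i i' j j' => ?_
  have h := sum_mul_eq_zero_of_isMaxOn_P0 R C hZ hmax hZint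
    (D := Matrix.vecMulVec (Pi.single i 1 - Pi.single i' 1) (Pi.single j 1 - Pi.single j' 1))
    (fun p => by simp [Matrix.vecMulVec_apply, ← mul_sum, sum_sub_distrib])
    (fun q => by simp [Matrix.vecMulVec_apply, ← sum_mul, sum_sub_distrib])
  simp only [Matrix.vecMulVec_apply, Pi.sub_apply, Pi.single_apply, mul_sub, mul_ite,
    mul_one, mul_zero, sum_sub_distrib, sum_ite_eq', mem_univ, if_true] at h
  have hlog : ∀ p q, log (Z p q / (1 - Z p q)) = -(log (1 - Z p q) - log (Z p q)) := fun p q => by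
    rw [log_div (hZint p q).1.ne' (sub_pos.2 (hZint p q).2).ne']
    ring
  simp only [hlog]
  linarith

variable {x : Fin m → ℝ} {y : Fin n → ℝ}

lemma F0_pos (hx : ∀ i, 0 < x i) (hy : ∀ j, 0 < y j) : 0 < F0 R C x y := by
  have hA : 0 < ∏ i, x i ^ (-(R i : ℤ)) := prod_pos fun i _ => zpow_pos (hx i) _
  have hB : 0 < ∏ j, y j ^ (-(C j : ℤ)) := prod_pos fun j _ => zpow_pos (hy j) _
  have hP : 0 < ∏ i, ∏ j, (1 + x i * y j) := prod_pos fun i _ => prod_pos fun j _ => by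
    nlinarith [mul_pos (hx i) (hy j)]
  exact mul_pos (mul_pos hA hB) hP

lemma log_F0_eq (hx : ∀ i, 0 < x i) (hy : ∀ j, 0 < y j) {X : Matrix (Fin m) (Fin n) ℝ}
    (hX : X ∈ P0 R C) :
    log (F0 R C x y) = ∑ i, ∑ j, (log (1 + x i * y j) - X i j * log (x i * y j)) := by
  have hxy : ∀ i j, 0 < 1 + x i * y j := fun i j => by nlinarith [mul_pos (hx i) (hy j)]
  have hR : ∀ i, (R i : ℝ) = ∑ j, X i j := fun i => (hX.2.1 i).symm
  have hC : ∀ j, (C j : ℝ) = ∑ i, X i j := fun j => (hX.2.2 j).symm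
  have hA : 0 < ∏ i, x i ^ (-(R i : ℤ)) := prod_pos fun i _ => zpow_pos (hx i) _
  have hB : 0 < ∏ j, y j ^ (-(C j : ℤ)) := prod_pos fun j _ => zpow_pos (hy j) _
  have hP : 0 < ∏ i, ∏ j, (1 + x i * y j) := prod_pos fun i _ => prod_pos fun j _ => hxy i j
  rw [F0, log_mul (mul_pos hA hB).ne' hP.ne', log_mul hA.ne' hB.ne',
    log_prod fun i _ => (zpow_pos (hx i) _).ne', log_prod fun j _ => (zpow_pos (hy j) _).ne',
    log_prod fun i _ => (prod_pos fun j _ => hxy i j).ne']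
  simp only [log_zpow, log_prod fun j _ => (hxy _ j).ne', log_mul (hx _).ne' (hy _).ne',
    Int.cast_neg, Int.cast_natCast, hR, hC, neg_mul, sum_mul, sum_neg_distrib, mul_add,
    sub_add_eq_sub_sub, sum_sub_distrib]
  rw [sum_comm (s := univ) (t := univ) (f := fun j i => X i j * log (y j))]
  ring

lemma exp_entH_le_F0 (hx : ∀ i, 0 < x i) (hy : ∀ j, 0 < y j) {X : Matrix (Fin m) (Fin n) ℝ}
    (hX : X ∈ P0 R C) : exp (entH X) ≤ F0 R C x y := by
  rw [← exp_log (F0_pos R C hx hy), exp_le_exp, log_F0_eq R C hx hy hX, entH_eq_sum_binEntropy]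
  exact sum_le_sum fun i _ => sum_le_sum fun j _ =>
    binEntropy_le_log_one_add_sub_mul_log (hX.1 i j).1 (hX.1 i j).2 (mul_pos (hx i) (hy j))

lemma F0_eq_exp_entH (hx : ∀ i, 0 < x i) (hy : ∀ j, 0 < y j) {X : Matrix (Fin m) (Fin n) ℝ}
    (hX : X ∈ P0 R C) (hXint : ∀ i j, X i j ∈ Set.Ioo 0 1)
    (hxy : ∀ i j, x i * y j = X i j / (1 - X i j)) : F0 R C x y = exp (entH X) := by
  rw [← exp_log (F0_pos R C hx hy), log_F0_eq R C hx hy hX, entH_eq_sum_binEntropy]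
  simp only [hxy, ← binEntropy_eq_log_one_add_sub_mul_log (hXint _ _)]

end Entropy

theorem stmt8_general {m n : ℕ} (R : Fin m → ℕ) (C : Fin n → ℕ)
    (hint : ∃ Y ∈ P0 R C, ∀ i j, 0 < Y i j ∧ Y i j < 1) :
    StrictConcaveOn ℝ (P0 R C) entH ∧
    ∃ Z0 ∈ P0 R C,
      (∀ X ∈ P0 R C, X ≠ Z0 → entH X < entH Z0) ∧
      (∀ i j, 0 < Z0 i j ∧ Z0 i j < 1) ∧
      (∃ x y, (∀ i, 0 < x i) ∧ (∀ j, 0 < y j) ∧ F0 R C x y = alpha0 R C) ∧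
      alpha0 R C = Real.exp (entH Z0) := by
  obtain ⟨Y, hY, hYint⟩ := hint
  have hP0 : ∀ X ∈ P0 R C, ∀ i j, X i j ∈ Set.Icc 0 1 := fun X hX => hX.1
  have hconc := strictConcaveOn_entH (convex_P0 R C) hP0
  obtain ⟨Z, hZ, hmax⟩ :=
    (isCompact_P0 R C).exists_isMaxOn ⟨Y, hY⟩ continuous_entH.continuousOn
  have hZint := mem_Ioo_of_isMaxOn_entH (convex_P0 R C) hP0 hY hYint hZ hmax
  obtain ⟨a, b, hab⟩ := exists_log_odds_eq_add_of_isMaxOn_P0 R C hZ hmax hZint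
  have hx : ∀ i, 0 < exp (a i) := fun i => exp_pos _
  have hy : ∀ j, 0 < exp (b j) := fun j => exp_pos _
  have hF : F0 R C (exp ∘ a) (exp ∘ b) = exp (entH Z) :=
    F0_eq_exp_entH R C hx hy hZ hZint fun i j => by
      rw [← exp_add, ← hab, exp_log (div_pos (hZint i j).1 (sub_pos.2 (hZint i j).2))]
  have hα : alpha0 R C = exp (entH Z) := by
    refine IsLeast.csInf_eq ⟨⟨_, _, hx, hy, hF.symm⟩, ?_⟩
    rintro _ ⟨x, y, hx', hy', rfl⟩
    exact exp_entH_le_F0 R C hx' hy' hZ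
  refine ⟨hconc, Z, hZ, fun X hX hXZ => ?_, hZint, ⟨_, _, hx, hy, hF.trans hα.symm⟩, hα⟩
  refine (hmax hX).lt_of_ne fun hXZ' => hXZ (hconc.eq_of_isMaxOn (fun W hW => ?_) hmax hX hZ)
  exact hXZ' ▸ hmax hW

theorem stmt8 {m n : ℕ} (R : Fin m → ℕ) (C : Fin n → ℕ)
    (hR : ∀ i, 0 < R i) (hC : ∀ j, 0 < C j) (hbal : ∑ i, R i = ∑ j, C j)
    (hint : ∃ Y ∈ P0 R C, ∀ i j, 0 < Y i j ∧ Y i j < 1) :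
    StrictConcaveOn ℝ (P0 R C) entH ∧
    ∃ Z0 ∈ P0 R C,
      (∀ X ∈ P0 R C, X ≠ Z0 → entH X < entH Z0) ∧
      (∀ i j, 0 < Z0 i j ∧ Z0 i j < 1) ∧
      (∃ x y, (∀ i, 0 < x i) ∧ (∀ j, 0 < y j) ∧ F0 R C x y = alpha0 R C) ∧
      alpha0 R C = Real.exp (entH Z0) :=
  stmt8_general R C hint
end

section
/- Let R=(r_1,…,r_m) and C=(c_1,…,c_n) be positive integer vectors with r_1+…+r_m = c_1+…+c_n, and let P_+(R,C) be the polytope of all m×n real matrices X=(x_{ij}) with non-negative entries, row sums R and column sums C. Define g: P_+(R,C) → ℝ by g(X) = Σ_{i,j} [ (x_{ij}+1) ln(1+x_{ij}) − x_{ij} ln x_{ij} ]. Then g is strictly concave on P_+(R,C), hence attains its maximum at a unique matrix Z_+ = (z_{ij}) (the maximum entropy matrix), and moreover: (1) z_{ij} > 0 for all i,j; (2) α_+(R,C) = e^{g(Z_+)}. -/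
/-!
For `X ∈ P₊(R, C)` and `x, y ∈ (0, 1)`, summing the inequality
`(z + 1) ln (1 + z) − z ln z ≤ −z ln s − ln (1 − s)` (with `s = xᵢ yⱼ`, equality at
`z = s / (1 − s)`) over the entries of `X` and using its margins gives `g(X) ≤ ln F₊(x, y)`.
A minimizer `(x, y)` of `ln F₊` on the open box exists: `ln F₊` tends to `+∞` as some `xᵢ`, `yⱼ`
or `1 − xᵢ yⱼ` tends to `0`, and a point approaching a face `xᵢ = 1` or `yⱼ = 1` can be pushed
back inside along `(t x, y / t)`, on which `ln F₊` is constant because `∑ R = ∑ C`.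
At the minimizer, the vanishing of the partial derivatives says that `zᵢⱼ = xᵢ yⱼ / (1 − xᵢ yⱼ)`
has margins `R` and `C`, so `g(Z) = ln F₊(x, y) = ln α₊(R, C)` and `Z` maximizes `g`.
Uniqueness comes from strict concavity, since the second derivative of
`(z + 1) ln (1 + z) − z ln z` is `−1 / (z (1 + z)) < 0`.
-/
open Finset

/-- `F_+(x, y) = (∏ᵢ xᵢ^{-rᵢ}) (∏ⱼ yⱼ^{-cⱼ}) ∏_{i,j} 1/(1 - xᵢ yⱼ)`. -/
noncomputable def Fplus {m n : ℕ} (R : Fin m → ℕ) (C : Fin n → ℕ)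
    (x : Fin m → ℝ) (y : Fin n → ℝ) : ℝ :=
  (∏ i, x i ^ (-(R i : ℤ))) * (∏ j, y j ^ (-(C j : ℤ))) * ∏ i, ∏ j, (1 - x i * y j)⁻¹

/-- `α_+(R, C) = min { F_+(x, y) : 0 < xᵢ < 1, 0 < yⱼ < 1 }` (the minimum is attained). -/
noncomputable def alphaplus {m n : ℕ} (R : Fin m → ℕ) (C : Fin n → ℕ) : ℝ :=
  sInf {z | ∃ x y, (∀ i, 0 < x i ∧ x i < 1) ∧ (∀ j, 0 < y j ∧ y j < 1) ∧ z = Fplus R C x y}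

/-- The polytope of `m × n` non-negative real matrices with row sums `R` and column sums `C`. -/
def Pplus {m n : ℕ} (R : Fin m → ℕ) (C : Fin n → ℕ) : Set (Matrix (Fin m) (Fin n) ℝ) :=
  {X | (∀ i j, 0 ≤ X i j) ∧ (∀ i, ∑ j, X i j = R i) ∧ (∀ j, ∑ i, X i j = C j)}

/-- The entropy `g(X) = Σ_{i,j} [(x_{ij} + 1) ln(1 + x_{ij}) − x_{ij} ln x_{ij}]`
(with the convention `0 · ln 0 = 0`, which holds since `Real.log 0 = 0`). -/
noncomputable def entG {m n : ℕ} (X : Matrix (Fin m) (Fin n) ℝ) : ℝ :=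
  ∑ i, ∑ j, ((X i j + 1) * Real.log (1 + X i j) - X i j * Real.log (X i j))

open Real

noncomputable def entTerm (t : ℝ) : ℝ := (t + 1) * log (1 + t) - t * log t

lemma entG_eq_sum_entTerm {m n : ℕ} (X : Matrix (Fin m) (Fin n) ℝ) :
    entG X = ∑ i, ∑ j, entTerm (X i j) := rfl

lemma continuous_entTerm : Continuous entTerm := by
  have h : entTerm = fun t => (1 + t) * log (1 + t) - t * log t := by
    funext t; rw [entTerm, add_comm t]
  rw [h]
  exact (continuous_mul_log.comp (continuous_const_add 1)).sub continuous_mul_log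

lemma hasDerivAt_entTerm {t : ℝ} (ht : 0 < t) :
    HasDerivAt entTerm (log (1 + t) - log t) t := by
  have hlog : HasDerivAt (fun s => log (1 + s)) (1 / (1 + t)) t := by
    simpa using ((hasDerivAt_id t).const_add 1).log (by positivity)
  have h : HasDerivAt entTerm _ t :=
    (((hasDerivAt_id t).add_const 1).mul hlog).sub (hasDerivAt_mul_log ht.ne')
  refine h.congr_deriv ?_
  simp only [id_eq]
  field_simp
  ring

lemma strictConcaveOn_entTerm : StrictConcaveOn ℝ (Set.Ici 0) entTerm := by
  refine StrictAntiOn.strictConcaveOn_of_deriv (convex_Ici 0)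
    continuous_entTerm.continuousOn ?_
  rw [interior_Ici]
  intro a (ha : 0 < a) b (hb : 0 < b) hab
  rw [(hasDerivAt_entTerm ha).deriv, (hasDerivAt_entTerm hb).deriv,
    ← log_div (by positivity) hb.ne', ← log_div (by positivity) ha.ne']
  apply log_lt_log (by positivity)
  rw [div_lt_div_iff₀ hb ha]
  linarith

/-- Gibbs' inequality for the distributions `(z, 1) / (1 + z)` and `(s, 1 - s)`. -/
lemma entTerm_le {z s : ℝ} (hz : 0 ≤ z) (hs₀ : 0 < s) (hs₁ : s < 1) :
    entTerm z ≤ -z * log s - log (1 - s) := by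
  rcases hz.eq_or_lt with rfl | hz
  · simp [entTerm, log_nonpos (sub_nonneg.2 hs₁.le) (sub_le_self 1 hs₀.le)]
  have h₁ : log (s * (1 + z) / z) ≤ s * (1 + z) / z - 1 := log_le_sub_one_of_pos (by positivity)
  have h₂ : log ((1 - s) * (1 + z)) ≤ (1 - s) * (1 + z) - 1 :=
    log_le_sub_one_of_pos (by nlinarith)
  rw [log_div (by positivity) hz.ne', log_mul hs₀.ne' (by positivity)] at h₁
  rw [log_mul (by linarith) (by positivity)] at h₂
  have h₁' : z * (log s + log (1 + z) - log z) ≤ z * (s * (1 + z) / z) - z := by nlinarith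
  rw [mul_div_cancel₀ _ hz.ne'] at h₁'
  rw [entTerm]
  nlinarith

lemma entTerm_odds {s : ℝ} (hs₀ : 0 < s) (hs₁ : s < 1) :
    entTerm (s / (1 - s)) = -(s / (1 - s)) * log s - log (1 - s) := by
  have hs : 1 - s ≠ 0 := by linarith
  have h : 1 + s / (1 - s) = (1 - s)⁻¹ := by field_simp; ring
  rw [entTerm, add_comm _ (1 : ℝ), h, log_inv, log_div hs₀.ne' hs]
  field_simp
  ring

lemma convex_Pplus {m n : ℕ} (R : Fin m → ℕ) (C : Fin n → ℕ) : Convex ℝ (Pplus R C) := by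
  rintro X ⟨hX₀, hXr, hXc⟩ Y ⟨hY₀, hYr, hYc⟩ a b ha hb hab
  simp only [Pplus, Set.mem_ofPred_eq, Matrix.add_apply, Matrix.smul_apply, smul_eq_mul,
    sum_add_distrib, ← mul_sum, hXr, hYr, hXc, hYc, ← add_mul, hab, one_mul]
  exact ⟨fun i j => add_nonneg (mul_nonneg ha (hX₀ i j)) (mul_nonneg hb (hY₀ i j)),
    fun _ => trivial, fun _ => trivial⟩

lemma strictConcaveOn_entG {m n : ℕ} (R : Fin m → ℕ) (C : Fin n → ℕ) :
    StrictConcaveOn ℝ (Pplus R C) entG := by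
  refine ⟨convex_Pplus R C, fun X hX Y hY hne a b ha hb hab => ?_⟩
  obtain ⟨i₀, j₀, hij⟩ : ∃ i j, X i j ≠ Y i j := by
    by_contra! h
    exact hne (Matrix.ext h)
  simp only [entG_eq_sum_entTerm, smul_eq_mul, mul_sum, ← sum_add_distrib, Matrix.add_apply,
    Matrix.smul_apply]
  refine sum_lt_sum (fun i _ => sum_le_sum fun j _ => ?_) ⟨i₀, mem_univ _, ?_⟩
  · exact strictConcaveOn_entTerm.concaveOn.2 (hX.1 i j) (hY.1 i j) ha.le hb.le hab
  · refine sum_lt_sum (fun j _ => ?_) ⟨j₀, mem_univ _, ?_⟩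
    · exact strictConcaveOn_entTerm.concaveOn.2 (hX.1 i₀ j) (hY.1 i₀ j) ha.le hb.le hab
    · exact strictConcaveOn_entTerm.2 (hX.1 i₀ j₀) (hY.1 i₀ j₀) hij ha hb hab

def unitBox (ι : Type*) : Set (ι → ℝ) := Set.univ.pi fun _ => Set.Ioo 0 1

section UnitBox

variable {ι κ : Type*}

lemma isOpen_unitBox [Finite ι] : IsOpen (unitBox ι) :=
  isOpen_set_pi Set.finite_univ fun _ _ => isOpen_Ioo

lemma mul_lt_one_of_mem_unitBox {x : ι → ℝ} {y : κ → ℝ} (hx : x ∈ unitBox ι)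
    (hy : y ∈ unitBox κ) (i : ι) (j : κ) : x i * y j < 1 :=
  mul_lt_one_of_nonneg_of_lt_one_left (hx i trivial).1.le (hx i trivial).2 (hy j trivial).2.le

lemma exists_pos_smul_mem_unitBox [Fintype ι] [Fintype κ] {x : ι → ℝ} {y : κ → ℝ}
    (hx : ∀ i, 0 < x i) (hy : ∀ j, 0 < y j) (hxy : ∀ i j, x i * y j < 1) :
    ∃ t > (0 : ℝ), t • x ∈ unitBox ι ∧ t⁻¹ • y ∈ unitBox κ := by
  classical
  obtain ⟨t, hlo, hhi⟩ := Order.exists_between_finsets (insert (0 : ℝ) (univ.image y))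
    (univ.image fun i => 1 / x i) (by
      simp only [mem_insert, mem_image, mem_univ, true_and]
      rintro _ (rfl | ⟨j, rfl⟩) _ ⟨i, rfl⟩
      · exact one_div_pos.2 (hx i)
      · exact (lt_div_iff₀ (hx i)).2 (mul_comm (x i) (y j) ▸ hxy i j))
  have ht : 0 < t := hlo 0 (mem_insert_self _ _)
  refine ⟨t, ht, fun i _ => ⟨mul_pos ht (hx i), ?_⟩,
    fun j _ => ⟨mul_pos (inv_pos.2 ht) (hy j), ?_⟩⟩
  · exact (lt_div_iff₀ (hx i)).1 (hhi _ (mem_image_of_mem _ (mem_univ i)))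
  · exact (inv_mul_lt_one₀ ht).2 (hlo _ (mem_insert_of_mem (mem_image_of_mem _ (mem_univ j))))

noncomputable def oddsMatrix (x : ι → ℝ) (y : κ → ℝ) : Matrix ι κ ℝ :=
  Matrix.of fun i j => x i * y j / (1 - x i * y j)

lemma oddsMatrix_pos {x : ι → ℝ} {y : κ → ℝ} (hx : x ∈ unitBox ι) (hy : y ∈ unitBox κ)
    (i : ι) (j : κ) : 0 < oddsMatrix x y i j :=
  div_pos (mul_pos (hx i trivial).1 (hy j trivial).1)
    (sub_pos.2 (mul_lt_one_of_mem_unitBox hx hy i j))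

end UnitBox

section LogFplus

variable {ι κ : Type*} [Fintype ι] [Fintype κ]

noncomputable def logFplus (R : ι → ℕ) (C : κ → ℕ) (x : ι → ℝ) (y : κ → ℝ) : ℝ :=
  ∑ i, -(R i * log (x i)) + ∑ j, -(C j * log (y j)) + ∑ i, ∑ j, -log (1 - x i * y j)

lemma logFplus_comm (R : ι → ℕ) (C : κ → ℕ) (x : ι → ℝ) (y : κ → ℝ) :
    logFplus C R y x = logFplus R C x y := by
  simp only [logFplus, mul_comm (y _) (x _)]
  rw [sum_comm]
  ring

lemma logFplus_smul_inv {R : ι → ℕ} {C : κ → ℕ} (hbal : ∑ i, R i = ∑ j, C j) {x : ι → ℝ}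
    {y : κ → ℝ} (hx : ∀ i, 0 < x i) (hy : ∀ j, 0 < y j) {t : ℝ} (ht : 0 < t) :
    logFplus R C (t • x) (t⁻¹ • y) = logFplus R C x y := by
  have hbal' : ∑ i, (R i : ℝ) = ∑ j, (C j : ℝ) := by exact_mod_cast hbal
  have hprod i j : t * x i * (t⁻¹ * y j) = x i * y j := by field_simp
  simp only [logFplus, Pi.smul_apply, smul_eq_mul, hprod, log_mul ht.ne' (hx _).ne',
    log_mul (inv_ne_zero ht.ne') (hy _).ne', log_inv, mul_add, mul_neg, neg_neg, neg_add,
    sum_add_distrib]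
  have hcancel : ∑ i, -(R i * log t) + ∑ j, C j * log t = 0 := by
    rw [sum_neg_distrib, ← sum_mul, ← sum_mul, hbal']
    ring
  linarith

lemma neg_log_le_logFplus {R : ι → ℕ} {C : κ → ℕ} (hR : ∀ i, 0 < R i) (hC : ∀ j, 0 < C j)
    {x : ι → ℝ} {y : κ → ℝ} (hx : x ∈ unitBox ι) (hy : y ∈ unitBox κ) :
    (∀ i, -log (x i) ≤ logFplus R C x y) ∧ (∀ j, -log (y j) ≤ logFplus R C x y) ∧
      ∀ i j, -log (1 - x i * y j) ≤ logFplus R C x y := by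
  have hlog_x i : log (x i) ≤ 0 := log_nonpos (hx i trivial).1.le (hx i trivial).2.le
  have hlog_y j : log (y j) ≤ 0 := log_nonpos (hy j trivial).1.le (hy j trivial).2.le
  have hlog_xy i j : 0 ≤ -log (1 - x i * y j) := neg_nonneg.2 <|
    log_nonpos (sub_pos.2 (mul_lt_one_of_mem_unitBox hx hy i j)).le
      (sub_le_self 1 (mul_pos (hx i trivial).1 (hy j trivial).1).le)
  have hweight {k : ℕ} (hk : 0 < k) {a : ℝ} (ha : log a ≤ 0) : -log a ≤ -(k * log a) := by
    have : (1 : ℝ) ≤ k := by exact_mod_cast hk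
    nlinarith
  have ha i : 0 ≤ -(R i * log (x i)) := (neg_nonneg.2 (hlog_x i)).trans (hweight (hR i) (hlog_x i))
  have hb j : 0 ≤ -(C j * log (y j)) := (neg_nonneg.2 (hlog_y j)).trans (hweight (hC j) (hlog_y j))
  have hd i : 0 ≤ ∑ j, -log (1 - x i * y j) := sum_nonneg fun j _ => hlog_xy i j
  have hsA := sum_nonneg fun i (_ : i ∈ univ) => ha i
  have hsB := sum_nonneg fun j (_ : j ∈ univ) => hb j
  have hsD := sum_nonneg fun i (_ : i ∈ univ) => hd i
  unfold logFplus
  refine ⟨fun i => ?_, fun j => ?_, fun i j => ?_⟩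
  · linarith [hweight (hR i) (hlog_x i), single_le_sum (fun i _ => ha i) (mem_univ i)]
  · linarith [hweight (hC j) (hlog_y j), single_le_sum (fun j _ => hb j) (mem_univ j)]
  · linarith [single_le_sum (fun j _ => hlog_xy i j) (mem_univ j),
      single_le_sum (fun i _ => hd i) (mem_univ i)]

lemma exp_neg_le_of_logFplus_le {R : ι → ℕ} {C : κ → ℕ} (hR : ∀ i, 0 < R i)
    (hC : ∀ j, 0 < C j) {x : ι → ℝ} {y : κ → ℝ} (hx : x ∈ unitBox ι) (hy : y ∈ unitBox κ)
    {M : ℝ} (hM : logFplus R C x y ≤ M) :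
    (∀ i, exp (-M) ≤ x i) ∧ (∀ j, exp (-M) ≤ y j) ∧ ∀ i j, x i * y j ≤ 1 - exp (-M) := by
  obtain ⟨hA, hB, hD⟩ := neg_log_le_logFplus hR hC hx hy
  have key {a : ℝ} (ha : 0 < a) (h : -log a ≤ M) : exp (-M) ≤ a :=
    (le_log_iff_exp_le ha).1 (by linarith)
  exact ⟨fun i => key (hx i trivial).1 ((hA i).trans hM),
    fun j => key (hy j trivial).1 ((hB j).trans hM),
    fun i j => le_sub_comm.1 (key (sub_pos.2 (mul_lt_one_of_mem_unitBox hx hy i j))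
      ((hD i j).trans hM))⟩

lemma continuousOn_logFplus (R : ι → ℕ) (C : κ → ℕ) :
    ContinuousOn (Function.uncurry (logFplus R C))
      {p | (∀ i, p.1 i ≠ 0) ∧ (∀ j, p.2 j ≠ 0) ∧ ∀ i j, 1 - p.1 i * p.2 j ≠ 0} := by
  rintro p ⟨hx, hy, hxy⟩
  refine ContinuousAt.continuousWithinAt ?_
  simp only [Function.uncurry_def, logFplus]
  fun_prop (disch := first | exact hx _ | exact hy _ | exact hxy _ _)

theorem exists_isMinOn_logFplus {R : ι → ℕ} {C : κ → ℕ} (hR : ∀ i, 0 < R i)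
    (hC : ∀ j, 0 < C j) (hbal : ∑ i, R i = ∑ j, C j) :
    ∃ p ∈ unitBox ι ×ˢ unitBox κ,
      IsMinOn (Function.uncurry (logFplus R C)) (unitBox ι ×ˢ unitBox κ) p := by
  set f := Function.uncurry (logFplus R C)
  set B := unitBox ι ×ˢ unitBox κ
  set p₀ : (ι → ℝ) × (κ → ℝ) := (fun _ => 1 / 2, fun _ => 1 / 2)
  have hp₀ : p₀ ∈ B := ⟨fun _ _ => by norm_num, fun _ _ => by norm_num⟩
  set ε := exp (-f p₀)
  set K : Set ((ι → ℝ) × (κ → ℝ)) :=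
    (Set.univ.pi fun _ => Set.Icc ε 1) ×ˢ (Set.univ.pi fun _ => Set.Icc ε 1) ∩
      {p | ∀ i j, p.1 i * p.2 j ≤ 1 - ε}
  have hBK : ∀ p ∈ B, f p ≤ f p₀ → p ∈ K := by
    rintro ⟨x, y⟩ ⟨hx, hy⟩ hp
    obtain ⟨hεx, hεy, hεxy⟩ := exp_neg_le_of_logFplus_le hR hC hx hy hp
    exact ⟨⟨fun i _ => ⟨hεx i, (hx i trivial).2.le⟩, fun j _ => ⟨hεy j, (hy j trivial).2.le⟩⟩,
      hεxy⟩
  have hK : IsCompact K := by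
    refine ((isCompact_univ_pi fun _ => isCompact_Icc).prod
      (isCompact_univ_pi fun _ => isCompact_Icc)).inter_right ?_
    simp only [Set.ofPred_forall]
    exact isClosed_iInter fun i => isClosed_iInter fun j =>
      isClosed_le (by fun_prop) continuous_const
  have hε : 0 < ε := exp_pos _
  have hK₁ : ∀ p ∈ K, ∀ i, 0 < p.1 i := fun p hp i => hε.trans_le (hp.1.1 i trivial).1
  have hK₂ : ∀ p ∈ K, ∀ j, 0 < p.2 j := fun p hp j => hε.trans_le (hp.1.2 j trivial).1
  have hK₁₂ : ∀ p ∈ K, ∀ i j, p.1 i * p.2 j < 1 := fun p hp i j =>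
    (hp.2 i j).trans_lt (sub_lt_self 1 hε)
  obtain ⟨q, hqK, hq⟩ := hK.exists_isMinOn ⟨p₀, hBK p₀ hp₀ le_rfl⟩
    ((continuousOn_logFplus R C).mono fun p hp => ⟨fun i => (hK₁ p hp i).ne',
      fun j => (hK₂ p hp j).ne', fun i j => (sub_pos.2 (hK₁₂ p hp i j)).ne'⟩)
  have hqB : ∀ p ∈ B, f q ≤ f p := fun p hp => by
    by_cases h : f p ≤ f p₀
    · exact hq (hBK p hp h)
    · exact (hq (hBK p₀ hp₀ le_rfl)).trans (le_of_not_ge h)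
  obtain ⟨t, ht, hxt, hyt⟩ := exists_pos_smul_mem_unitBox (hK₁ q hqK) (hK₂ q hqK) (hK₁₂ q hqK)
  refine ⟨(t • q.1, t⁻¹ • q.2), ⟨hxt, hyt⟩, fun p hp => ?_⟩
  change logFplus R C (t • q.1) (t⁻¹ • q.2) ≤ f p
  rw [logFplus_smul_inv hbal (hK₁ q hqK) (hK₂ q hqK) ht]
  exact hqB p hp

noncomputable def rowPotential (r : ℕ) (y : κ → ℝ) (t : ℝ) : ℝ :=
  -(r * log t) + ∑ j, -log (1 - t * y j)

lemma logFplus_eq_sum_rowPotential (R : ι → ℕ) (C : κ → ℕ) (x : ι → ℝ) (y : κ → ℝ) :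
    logFplus R C x y = ∑ i, rowPotential (R i) y (x i) + ∑ j, -(C j * log (y j)) := by
  simp only [logFplus, rowPotential, sum_add_distrib]
  ring

lemma logFplus_update [DecidableEq ι] (R : ι → ℕ) (C : κ → ℕ) (x : ι → ℝ) (y : κ → ℝ)
    (i : ι) (t : ℝ) :
    logFplus R C (Function.update x i t) y
      = rowPotential (R i) y t + (logFplus R C x y - rowPotential (R i) y (x i)) := by
  have h := Function.apply_update (fun k => rowPotential (R k) y) x i t
  simp only [logFplus_eq_sum_rowPotential, h, sum_update_of_mem (mem_univ i),
    sdiff_singleton_eq_erase,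
    ← add_sum_erase univ (fun k => rowPotential (R k) y (x k)) (mem_univ i)]
  ring

lemma hasDerivAt_rowPotential (r : ℕ) {y : κ → ℝ} {t : ℝ} (ht : 0 < t)
    (hty : ∀ j, t * y j < 1) :
    HasDerivAt (rowPotential r y) (-(r / t) + ∑ j, y j / (1 - t * y j)) t := by
  have hlog j : HasDerivAt (fun s => -log (1 - s * y j)) (y j / (1 - t * y j)) t := by
    have h : HasDerivAt (fun s => -log (1 - s * y j)) _ t :=
      ((((hasDerivAt_id t).mul_const (y j)).const_sub 1).log (sub_pos.2 (hty j)).ne').neg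
    exact h.congr_deriv (by simp [neg_div])
  have h : HasDerivAt (rowPotential r y) _ t :=
    ((hasDerivAt_log ht.ne').const_mul (r : ℝ)).neg.add (HasDerivAt.fun_sum fun j _ => hlog j)
  exact h.congr_deriv (by field_simp)

theorem sum_odds_eq_of_isMinOn {R : ι → ℕ} {C : κ → ℕ} {x : ι → ℝ} {y : κ → ℝ}
    (hmin : IsMinOn (Function.uncurry (logFplus R C)) (unitBox ι ×ˢ unitBox κ) (x, y))
    (hx : x ∈ unitBox ι) (hy : y ∈ unitBox κ) (i : ι) :
    ∑ j, x i * y j / (1 - x i * y j) = R i := by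
  classical
  have hloc : IsLocalMin (fun t => logFplus R C (Function.update x i t) y) (x i) := by
    have h : IsLocalMin (Function.uncurry (logFplus R C))
        ((fun t : ℝ => (Function.update x i t, y)) (x i)) := by
      simpa using hmin.isLocalMin ((isOpen_unitBox.prod isOpen_unitBox).mem_nhds ⟨hx, hy⟩)
    exact IsLocalMin.comp_continuous (g := fun t : ℝ => (Function.update x i t, y)) h
      ((continuous_const.update i continuous_id).prodMk continuous_const).continuousAt
  simp only [logFplus_update] at hloc
  have hxi := hx i trivial
  have hderiv := (hasDerivAt_rowPotential (R i) hxi.1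
    (mul_lt_one_of_mem_unitBox hx hy i)).add_const (logFplus R C x y - rowPotential (R i) y (x i))
  have h := hloc.hasDerivAt_eq_zero hderiv
  have h' : ∑ j, y j / (1 - x i * y j) = R i / x i := by linarith
  rw [← mul_div_cancel_left₀ (R i : ℝ) hxi.1.ne', mul_div_assoc, ← h', mul_sum]
  simp only [mul_div_assoc]

lemma isMinOn_logFplus_swap {R : ι → ℕ} {C : κ → ℕ} {x : ι → ℝ} {y : κ → ℝ}
    (hmin : IsMinOn (Function.uncurry (logFplus R C)) (unitBox ι ×ˢ unitBox κ) (x, y)) :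
    IsMinOn (Function.uncurry (logFplus C R)) (unitBox κ ×ˢ unitBox ι) (y, x) :=
  fun p hp => by
    change logFplus C R y x ≤ logFplus C R p.1 p.2
    rw [logFplus_comm R C x y, logFplus_comm R C p.2 p.1]
    exact hmin (show (p.2, p.1) ∈ _ from ⟨hp.2, hp.1⟩)

lemma sum_dual_eq_logFplus {R : ι → ℕ} {C : κ → ℕ} {X : Matrix ι κ ℝ}
    (hrow : ∀ i, ∑ j, X i j = R i) (hcol : ∀ j, ∑ i, X i j = C j) {x : ι → ℝ} {y : κ → ℝ}
    (hx : ∀ i, x i ≠ 0) (hy : ∀ j, y j ≠ 0) :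
    ∑ i, ∑ j, (-X i j * log (x i * y j) - log (1 - x i * y j)) = logFplus R C x y := by
  have hsplit i j : -X i j * log (x i * y j) - log (1 - x i * y j)
      = -(X i j * log (x i)) + -(X i j * log (y j)) + -log (1 - x i * y j) := by
    rw [log_mul (hx i) (hy j)]
    ring
  have hrow' i : ∑ j, X i j * log (x i) = R i * log (x i) := by rw [← sum_mul, hrow]
  have hcol' : ∑ i, ∑ j, X i j * log (y j) = ∑ j, C j * log (y j) := by
    rw [sum_comm]
    simp only [← sum_mul, hcol]
  simp only [hsplit, sum_add_distrib, sum_neg_distrib, hrow', hcol', logFplus]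

end LogFplus

section MaxEntropy

variable {m n : ℕ} {R : Fin m → ℕ} {C : Fin n → ℕ} {x : Fin m → ℝ} {y : Fin n → ℝ}

lemma Fplus_eq_exp_logFplus (hx : ∀ i, 0 < x i) (hy : ∀ j, 0 < y j)
    (hxy : ∀ i j, x i * y j < 1) : Fplus R C x y = exp (logFplus R C x y) := by
  have hpow {a : ℝ} (ha : 0 < a) (k : ℕ) : a ^ (-(k : ℤ)) = exp (-(k * log a)) := by
    rw [exp_neg, ← log_pow, exp_log (pow_pos ha k), zpow_neg, zpow_natCast]
  simp only [Fplus, logFplus, exp_add, exp_sum, hpow (hx _), hpow (hy _),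
    exp_neg, exp_log (sub_pos.2 (hxy _ _))]

lemma oddsMatrix_mem_Pplus
    (hmin : IsMinOn (Function.uncurry (logFplus R C)) (unitBox _ ×ˢ unitBox _) (x, y))
    (hx : x ∈ unitBox _) (hy : y ∈ unitBox _) : oddsMatrix x y ∈ Pplus R C := by
  refine ⟨fun i j => (oddsMatrix_pos hx hy i j).le, sum_odds_eq_of_isMinOn hmin hx hy,
    fun j => ?_⟩
  rw [← sum_odds_eq_of_isMinOn (isMinOn_logFplus_swap hmin) hy hx j]
  simp only [oddsMatrix, Matrix.of_apply, mul_comm (x _) (y j)]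

lemma entG_le_logFplus {X : Matrix (Fin m) (Fin n) ℝ} (hX : X ∈ Pplus R C)
    (hx : x ∈ unitBox _) (hy : y ∈ unitBox _) : entG X ≤ logFplus R C x y := by
  rw [entG_eq_sum_entTerm, ← sum_dual_eq_logFplus hX.2.1 hX.2.2 (fun i => (hx i trivial).1.ne')
    (fun j => (hy j trivial).1.ne')]
  gcongr with i _ j _
  exact entTerm_le (hX.1 i j) (mul_pos (hx i trivial).1 (hy j trivial).1)
    (mul_lt_one_of_mem_unitBox hx hy i j)

lemma entG_oddsMatrix (hZ : oddsMatrix x y ∈ Pplus R C) (hx : x ∈ unitBox _)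
    (hy : y ∈ unitBox _) : entG (oddsMatrix x y) = logFplus R C x y := by
  rw [entG_eq_sum_entTerm, ← sum_dual_eq_logFplus hZ.2.1 hZ.2.2 (fun i => (hx i trivial).1.ne')
    (fun j => (hy j trivial).1.ne')]
  exact sum_congr rfl fun i _ => sum_congr rfl fun j _ =>
    entTerm_odds (mul_pos (hx i trivial).1 (hy j trivial).1) (mul_lt_one_of_mem_unitBox hx hy i j)

lemma alphaplus_eq_exp_logFplus
    (hmin : IsMinOn (Function.uncurry (logFplus R C)) (unitBox _ ×ˢ unitBox _) (x, y))
    (hx : x ∈ unitBox _) (hy : y ∈ unitBox _) : alphaplus R C = exp (logFplus R C x y) := by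
  have hF {x' : Fin m → ℝ} {y' : Fin n → ℝ} (hx' : ∀ i, 0 < x' i ∧ x' i < 1)
      (hy' : ∀ j, 0 < y' j ∧ y' j < 1) : Fplus R C x' y' = exp (logFplus R C x' y') :=
    Fplus_eq_exp_logFplus (fun i => (hx' i).1) (fun j => (hy' j).1)
      (mul_lt_one_of_mem_unitBox (fun i _ => hx' i) fun j _ => hy' j)
  refine IsLeast.csInf_eq ⟨⟨x, y, fun i => hx i trivial, fun j => hy j trivial,
    (hF (fun i => hx i trivial) fun j => hy j trivial).symm⟩, ?_⟩
  rintro _ ⟨x', y', hx', hy', rfl⟩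
  rw [hF hx' hy']
  exact exp_le_exp.2 (hmin (show (x', y') ∈ _ from ⟨fun i _ => hx' i, fun j _ => hy' j⟩))

end MaxEntropy

theorem stmt9 {m n : ℕ} (R : Fin m → ℕ) (C : Fin n → ℕ)
    (hR : ∀ i, 0 < R i) (hC : ∀ j, 0 < C j) (hbal : ∑ i, R i = ∑ j, C j) :
    StrictConcaveOn ℝ (Pplus R C) entG ∧
    ∃ Zplus ∈ Pplus R C,
      (∀ X ∈ Pplus R C, X ≠ Zplus → entG X < entG Zplus) ∧
      (∀ i j, 0 < Zplus i j) ∧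
      alphaplus R C = Real.exp (entG Zplus) := by
  obtain ⟨⟨x, y⟩, ⟨hx, hy⟩, hmin⟩ := exists_isMinOn_logFplus hR hC hbal
  have hZ := oddsMatrix_mem_Pplus hmin hx hy
  have hconc := strictConcaveOn_entG R C
  have hmax : IsMaxOn entG (Pplus R C) (oddsMatrix x y) := fun X hX =>
    (entG_le_logFplus hX hx hy).trans_eq (entG_oddsMatrix hZ hx hy).symm
  refine ⟨hconc, oddsMatrix x y, hZ, fun X hX hne => (hmax hX).lt_of_ne fun h => hne ?_,
    oddsMatrix_pos hx hy, ?_⟩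
  · exact hconc.eq_of_isMaxOn (fun Y hY => h ▸ hmax hY) hmax hX hZ
  · rw [alphaplus_eq_exp_logFplus hmin hx hy, entG_oddsMatrix hZ hx hy]
end

section
/- Let R=(r_1,…,r_m) and C=(c_1,…,c_n) be positive integer vectors with r_1+…+r_m = c_1+…+c_n = N. For an m×n matrix Z=(z_{ij}), let B(Z) be the N×N matrix whose rows are split into m blocks of sizes r_1,…,r_m, whose columns are split into n blocks of sizes c_1,…,c_n, and whose entry in a row from the i-th row block and a column from the j-th column block equals z_{ij}. Then per B(Z) = (∏_{i=1}^m r_i!)(∏_{j=1}^n c_j!) · Σ_{D ∈ A_+(R,C), D=(d_{ij})} ∏_{i,j} z_{ij}^{d_{ij}}/d_{ij}!. -/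
open Finset

set_option linter.unusedSectionVars false
set_option maxHeartbeats 800000

section aux
variable {X K : Type*} [Fintype X] [DecidableEq X] [Fintype K] [DecidableEq K]

lemma filter_card_perm (τ : Equiv.Perm X) (p : X → Prop) [DecidablePred p] :
    (univ.filter fun a => p (τ a)).card = (univ.filter p).card := by
  apply Finset.card_bij (fun a _ => τ a)
  · intro a ha
    simp only [mem_filter, mem_univ, true_and] at ha ⊢
    exact ha
  · intro a _ b _ h
    exact τ.injective h
  · intro b hb
    refine ⟨τ.symm b, ?_, by simp⟩
    simp only [mem_filter, mem_univ, true_and] at hb ⊢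
    simpa using hb

noncomputable def permFiberEquiv (f g : X → K) :
    {α : Equiv.Perm X // ∀ a, f (α a) = g a} ≃ ∀ k, ({x // g x = k} ≃ {x // f x = k}) where
  toFun α k :=
    { toFun := fun x => ⟨α.1 x.1, by rw [α.2]; exact x.2⟩
      invFun := fun y => ⟨α.1.symm y.1, by
        have := α.2 (α.1.symm y.1); rw [Equiv.apply_symm_apply] at this; rw [← this]; exact y.2⟩
      left_inv := fun x => Subtype.ext (by simp)
      right_inv := fun y => Subtype.ext (by simp) }
  invFun E := ⟨Equiv.ofFiberEquiv E, fun a => Equiv.ofFiberEquiv_map E a⟩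
  left_inv α := Subtype.ext (Equiv.ext fun a => rfl)
  right_inv E := by
    funext k
    apply Equiv.ext
    rintro ⟨x, rfl⟩
    rfl

lemma card_permFiber (f g : X → K)
    (h : ∀ k, (univ.filter fun x => f x = k).card = (univ.filter fun x => g x = k).card) :
    Fintype.card {α : Equiv.Perm X // ∀ a, f (α a) = g a}
      = ∏ k, Nat.factorial ((univ.filter fun x => g x = k).card) := by
  rw [Fintype.card_congr (permFiberEquiv f g), Fintype.card_pi]
  refine Finset.prod_congr rfl fun k _ => ?_
  have hc : Fintype.card {x // g x = k} = Fintype.card {x // f x = k} := by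
    rw [Fintype.card_subtype, Fintype.card_subtype, ← h]
  rw [Fintype.card_equiv (Fintype.equivOfCardEq hc), Fintype.card_subtype]

lemma exists_perm_align (f g : X → K)
    (h : ∀ k, (univ.filter fun x => f x = k).card = (univ.filter fun x => g x = k).card) :
    ∃ α : Equiv.Perm X, ∀ a, f (α a) = g a := by
  have hc : ∀ k, Fintype.card {x // g x = k} = Fintype.card {x // f x = k} := by
    intro k; rw [Fintype.card_subtype, Fintype.card_subtype, ← h]
  exact ⟨Equiv.ofFiberEquiv (fun k => Fintype.equivOfCardEq (hc k)),
    fun a => Equiv.ofFiberEquiv_map _ a⟩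

def sigmaFstFiber (β : K → Type*) (k : K) : {y : Σ k', β k' // y.1 = k} ≃ β k where
  toFun y := y.2 ▸ y.1.2
  invFun b := ⟨⟨k, b⟩, rfl⟩
  left_inv := by rintro ⟨⟨k', b⟩, rfl⟩; rfl
  right_inv b := rfl

lemma exists_fn_fibers (w : K → ℕ) (hw : ∑ k, w k = Fintype.card X) :
    ∃ f : X → K, ∀ k, (univ.filter fun x => f x = k).card = w k := by
  have hcard : Fintype.card X = Fintype.card (Σ k, Fin (w k)) := by
    simp [Fintype.card_sigma, hw]
  set e := Fintype.equivOfCardEq hcard with he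
  refine ⟨fun x => (e x).1, fun k => ?_⟩
  rw [← Fintype.card_subtype]
  rw [Fintype.card_congr ((Equiv.subtypeEquiv e (fun x => Iff.rfl)).trans
    (sigmaFstFiber (fun k' => Fin (w k')) k))]
  simp

end aux

section main
variable {m n N : ℕ}

def Phi (rb : Fin N → Fin m) (cb : Fin N → Fin n) (σ : Equiv.Perm (Fin N)) :
    Matrix (Fin m) (Fin n) ℕ :=
  fun i j => (univ.filter fun a => rb (σ a) = i ∧ cb a = j).card

lemma Phi_row (rb : Fin N → Fin m) (cb : Fin N → Fin n) (σ : Equiv.Perm (Fin N)) (i : Fin m) :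
    ∑ j, Phi rb cb σ i j = (univ.filter fun a => rb (σ a) = i).card := by
  rw [Finset.card_eq_sum_card_fiberwise (f := cb) (t := univ) (fun x _ => mem_univ _)]
  refine Finset.sum_congr rfl fun j _ => ?_
  rw [Phi, Finset.filter_filter]

lemma Phi_col (rb : Fin N → Fin m) (cb : Fin N → Fin n) (σ : Equiv.Perm (Fin N)) (j : Fin n) :
    ∑ i, Phi rb cb σ i j = (univ.filter fun a => cb a = j).card := by
  rw [Finset.card_eq_sum_card_fiberwise (f := fun a => rb (σ a)) (t := univ)
    (fun x _ => mem_univ _)]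
  refine Finset.sum_congr rfl fun i _ => ?_
  rw [Phi, Finset.filter_filter]
  congr 1
  apply Finset.filter_congr
  intro x _
  simp [and_comm]

lemma prod_block (rb : Fin N → Fin m) (cb : Fin N → Fin n) (Z : Matrix (Fin m) (Fin n) ℝ)
    (σ : Equiv.Perm (Fin N)) :
    ∏ a, Z (rb (σ a)) (cb a) = ∏ i, ∏ j, Z i j ^ Phi rb cb σ i j := by
  rw [← Finset.prod_fiberwise_of_maps_to
    (g := fun a => (rb (σ a), cb a)) (t := univ) (fun a _ => mem_univ _)
    (fun a => Z (rb (σ a)) (cb a))]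
  rw [← Fintype.prod_prod_type']
  refine Finset.prod_congr rfl fun k _ => ?_
  have : ∀ a ∈ univ.filter fun a => (rb (σ a), cb a) = k,
      Z (rb (σ a)) (cb a) = Z k.1 k.2 := by
    intro a ha
    simp only [mem_filter, mem_univ, true_and] at ha
    rw [← ha]
  rw [Finset.prod_congr rfl this, Finset.prod_const]
  congr 1
  rw [Phi]
  congr 1
  apply Finset.filter_congr
  intro x _
  simp [Prod.ext_iff]
end main

section main2
variable {m n N : ℕ}

lemma exists_sigma (R : Fin m → ℕ) (C : Fin n → ℕ)
    (rb : Fin N → Fin m) (cb : Fin N → Fin n)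
    (hrb : ∀ i, (Finset.univ.filter (fun a => rb a = i)).card = R i)
    (hcb : ∀ j, (Finset.univ.filter (fun b => cb b = j)).card = C j)
    (hRN : ∑ i, R i = N)
    (D : Matrix (Fin m) (Fin n) ℕ)
    (hD1 : ∀ i, ∑ j, D i j = R i) (hD2 : ∀ j, ∑ i, D i j = C j) :
    ∃ σ : Equiv.Perm (Fin N), ∀ i j, Phi rb cb σ i j = D i j := by
  -- a function with fibers of size D i j
  obtain ⟨f₀, hf₀⟩ := exists_fn_fibers (X := Fin N) (fun k : Fin m × Fin n => D k.1 k.2)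
    (by rw [Fintype.sum_prod_type, Fintype.card_fin]
        simp only [hD1]; exact hRN)
  -- marginal fibers of f₀
  have hfst : ∀ i, (univ.filter fun a => (f₀ a).1 = i).card = R i := by
    intro i
    rw [Finset.card_eq_sum_card_fiberwise (f := fun a => (f₀ a).2) (t := univ)
      (fun x _ => mem_univ _)]
    rw [← hD1 i]
    refine Finset.sum_congr rfl fun j _ => ?_
    rw [Finset.filter_filter, ← hf₀ (i, j)]
    congr 1
    apply Finset.filter_congr
    intro x _
    simp [Prod.ext_iff]
  have hsnd : ∀ j, (univ.filter fun a => (f₀ a).2 = j).card = C j := by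
    intro j
    rw [Finset.card_eq_sum_card_fiberwise (f := fun a => (f₀ a).1) (t := univ)
      (fun x _ => mem_univ _)]
    rw [← hD2 j]
    refine Finset.sum_congr rfl fun i _ => ?_
    rw [Finset.filter_filter, ← hf₀ (i, j)]
    congr 1
    apply Finset.filter_congr
    intro x _
    simp [Prod.ext_iff, and_comm]
  -- align second coordinate with cb
  obtain ⟨u, hu⟩ := exists_perm_align (fun a => (f₀ a).2) cb
    (fun j => by rw [hsnd j, hcb j])
  -- align rb with first coordinate of f₀ ∘ u
  obtain ⟨σ₀, hσ₀⟩ := exists_perm_align rb (fun a => (f₀ (u a)).1)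
    (fun i => by
      rw [hrb i, filter_card_perm u (fun a => (f₀ a).1 = i), hfst i])
  refine ⟨σ₀, fun i j => ?_⟩
  rw [Phi]
  have : ∀ a, (rb (σ₀ a) = i ∧ cb a = j) ↔ f₀ (u a) = (i, j) := by
    intro a
    rw [hσ₀ a, ← hu a, Prod.ext_iff]
  calc (univ.filter fun a => rb (σ₀ a) = i ∧ cb a = j).card
      = (univ.filter fun a => f₀ (u a) = (i, j)).card := by
        congr 1; apply Finset.filter_congr; intro x _; simp [this x]
    _ = (univ.filter fun a => f₀ a = (i, j)).card :=
        filter_card_perm u (fun a => f₀ a = (i, j))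
    _ = D i j := hf₀ (i, j)

end main2

section main3
variable {m n N : ℕ}

lemma card_permFiber' {X K : Type*} [Fintype X] [DecidableEq X] [Fintype K] [DecidableEq K]
    (f g : X → K)
    (h : ∀ k, (univ.filter fun x => f x = k).card = (univ.filter fun x => g x = k).card) :
    (univ.filter fun α : Equiv.Perm X => ∀ a, f (α a) = g a).card
      = ∏ k, Nat.factorial ((univ.filter fun x => g x = k).card) := by
  rw [← Fintype.card_subtype]
  exact card_permFiber f g h

lemma count_fiber (R : Fin m → ℕ) (C : Fin n → ℕ)
    (rb : Fin N → Fin m) (cb : Fin N → Fin n)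
    (hrb : ∀ i, (Finset.univ.filter (fun a => rb a = i)).card = R i)
    (hcb : ∀ j, (Finset.univ.filter (fun b => cb b = j)).card = C j)
    (hRN : ∑ i, R i = N)
    (D : Matrix (Fin m) (Fin n) ℕ)
    (hD1 : ∀ i, ∑ j, D i j = R i) (hD2 : ∀ j, ∑ i, D i j = C j) :
    (univ.filter fun σ : Equiv.Perm (Fin N) => Phi rb cb σ = D).card
      * ∏ i, ∏ j, Nat.factorial (D i j)
    = (∏ i, Nat.factorial (R i)) * ∏ j, Nat.factorial (C j) := by
  obtain ⟨σ₀, hσ₀⟩ := exists_sigma R C rb cb hrb hcb hRN D hD1 hD2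
  have hσ₀' : Phi rb cb σ₀ = D := by funext i j; exact hσ₀ i j
  set GH : Finset (Equiv.Perm (Fin N) × Equiv.Perm (Fin N)) :=
    univ.filter fun ab => (∀ x, cb (ab.1 x) = cb x) ∧ (∀ x, rb (ab.2 x) = rb x) with hGH
  -- fibers of joint label maps
  have hfib : ∀ τ : Equiv.Perm (Fin N), Phi rb cb τ = D → ∀ k : Fin m × Fin n,
      (univ.filter fun a => (rb (τ a), cb a) = k).card = D k.1 k.2 := by
    intro τ hτ k
    have : Phi rb cb τ k.1 k.2 = D k.1 k.2 := by rw [hτ]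
    rw [← this, Phi]
    congr 1
    apply Finset.filter_congr
    intro x _
    simp [Prod.ext_iff]
  -- cardinality of GH
  have h1 : GH.card = (∏ j, Nat.factorial (C j)) * ∏ i, Nat.factorial (R i) := by
    have hset : (univ.filter fun ab : Equiv.Perm (Fin N) × Equiv.Perm (Fin N) =>
        (∀ x, cb (ab.1 x) = cb x) ∧ (∀ x, rb (ab.2 x) = rb x))
        = (univ.filter fun α : Equiv.Perm (Fin N) => ∀ x, cb (α x) = cb x) ×ˢ
          (univ.filter fun β : Equiv.Perm (Fin N) => ∀ x, rb (β x) = rb x) := by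
      ext ab
      simp [Finset.mem_product]
    have e1 : (univ.filter fun α : Equiv.Perm (Fin N) => ∀ x, cb (α x) = cb x).card
        = ∏ j, Nat.factorial ((univ.filter fun x => cb x = j).card) := by
      convert card_permFiber' cb cb (fun _ => rfl) using 2
      exact (Finset.filter_congr_decidable _ _ _).symm
    have e2 : (univ.filter fun β : Equiv.Perm (Fin N) => ∀ x, rb (β x) = rb x).card
        = ∏ i, Nat.factorial ((univ.filter fun x => rb x = i).card) := by
      convert card_permFiber' rb rb (fun _ => rfl) using 2
      exact (Finset.filter_congr_decidable _ _ _).symm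
    rw [hGH, hset, Finset.card_product, e1, e2]
    simp only [hcb, hrb]
  -- the map (α, β) ↦ β σ₀ α lands in the fiber over D
  have maps : ∀ ab ∈ GH, (ab.2 * σ₀ * ab.1)
      ∈ univ.filter fun σ : Equiv.Perm (Fin N) => Phi rb cb σ = D := by
    intro ab hab
    rw [hGH, mem_filter] at hab
    obtain ⟨-, hc, hr⟩ := hab
    rw [mem_filter]
    refine ⟨mem_univ _, ?_⟩
    funext i j
    show (univ.filter fun a => rb ((ab.2 * σ₀ * ab.1) a) = i ∧ cb a = j).card = D i j
    calc (univ.filter fun a => rb ((ab.2 * σ₀ * ab.1) a) = i ∧ cb a = j).card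
        = (univ.filter fun a => rb (σ₀ (ab.1 a)) = i ∧ cb (ab.1 a) = j).card := by
          congr 1
          apply Finset.filter_congr
          intro x _
          simp only [Equiv.Perm.mul_apply]
          rw [hr (σ₀ (ab.1 x)), hc x]
      _ = (univ.filter fun a => rb (σ₀ a) = i ∧ cb a = j).card :=
          filter_card_perm ab.1 (fun a => rb (σ₀ a) = i ∧ cb a = j)
      _ = D i j := hσ₀ i j
  -- each fiber of this map has ∏ (D i j)! elements
  have key : ∀ σ ∈ univ.filter fun σ : Equiv.Perm (Fin N) => Phi rb cb σ = D,
      (GH.filter fun ab => ab.2 * σ₀ * ab.1 = σ).card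
        = ∏ i, ∏ j, Nat.factorial (D i j) := by
    intro σ hσmem
    have hσ : Phi rb cb σ = D := (mem_filter.mp hσmem).2
    have hcard : (GH.filter fun ab => ab.2 * σ₀ * ab.1 = σ).card
        = (univ.filter fun α : Equiv.Perm (Fin N) =>
            ∀ a, (rb (σ₀ (α a)), cb (α a)) = (rb (σ a), cb a)).card := by
      apply Finset.card_bij (fun ab _ => ab.1)
      · intro ab hab
        simp only [hGH, mem_filter, mem_univ, true_and, Finset.filter_filter] at hab ⊢
        obtain ⟨⟨hc, hr⟩, hF⟩ := hab
        intro a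
        have hy : ab.2 (σ₀ (ab.1 a)) = σ a := DFunLike.congr_fun hF a
        simp only [Prod.mk.injEq]
        exact ⟨by rw [← hy, hr], hc a⟩
      · intro ab hab ab' hab' hEq
        simp only [hGH, mem_filter, mem_univ, true_and, Finset.filter_filter] at hab hab'
        have h2 : ab.2 = σ * (σ₀ * ab.1)⁻¹ := by rw [← hab.2]; group
        have h2' : ab'.2 = σ * (σ₀ * ab'.1)⁻¹ := by rw [← hab'.2]; group
        exact Prod.ext_iff.mpr ⟨hEq, by rw [h2, h2', hEq]⟩
      · intro α hα
        simp only [mem_filter, mem_univ, true_and] at hα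
        refine ⟨(α, σ * (σ₀ * α)⁻¹), ?_, rfl⟩
        simp only [hGH, mem_filter, mem_univ, true_and, Finset.filter_filter]
        have hfst : ∀ a, rb (σ₀ (α a)) = rb (σ a) := fun a => congrArg Prod.fst (hα a)
        have hsnd : ∀ a, cb (α a) = cb a := fun a => congrArg Prod.snd (hα a)
        refine ⟨⟨hsnd, ?_⟩, by group⟩
        intro x
        have hx : σ₀ (α ((σ₀ * α)⁻¹ x)) = x := Equiv.apply_symm_apply (σ₀ * α) x
        show rb (σ ((σ₀ * α)⁻¹ x)) = rb x
        rw [← hfst ((σ₀ * α)⁻¹ x), hx]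
    have e3 : (univ.filter fun α : Equiv.Perm (Fin N) =>
          ∀ a, (rb (σ₀ (α a)), cb (α a)) = (rb (σ a), cb a)).card
        = ∏ k : Fin m × Fin n,
            Nat.factorial ((univ.filter fun x => (rb (σ x), cb x) = k).card) := by
      convert card_permFiber' (fun a => (rb (σ₀ a), cb a)) (fun a => (rb (σ a), cb a))
        (fun k => by
          show (univ.filter fun x => (rb (σ₀ x), cb x) = k).card
              = (univ.filter fun x => (rb (σ x), cb x) = k).card
          rw [hfib σ₀ hσ₀' k, hfib σ hσ k]) using 2
      exact (Finset.filter_congr_decidable _ _ _).symm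
    rw [hcard, e3]
    have e4 : ∏ k : Fin m × Fin n,
        Nat.factorial ((univ.filter fun x => (rb (σ x), cb x) = k).card)
        = ∏ k : Fin m × Fin n, Nat.factorial (D k.1 k.2) :=
      Finset.prod_congr rfl fun k _ => by rw [hfib σ hσ k]
    rw [e4]
    exact Fintype.prod_prod_type' (f := fun i j => Nat.factorial (D i j))
  -- put everything together
  have h2 : GH.card
      = (univ.filter fun σ : Equiv.Perm (Fin N) => Phi rb cb σ = D).card
        * ∏ i, ∏ j, Nat.factorial (D i j) := by
    rw [Finset.card_eq_sum_card_fiberwise maps]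
    rw [Finset.sum_congr rfl key, Finset.sum_const, smul_eq_mul]
  rw [← h2, h1, mul_comm]

end main3

/-- For an `m × n` matrix `Z`, the `N × N` matrix `B(Z)` has its rows partitioned (via a
labeling `rb`) into `m` blocks of sizes `r₁, …, r_m` and its columns partitioned (via a
labeling `cb`) into `n` blocks of sizes `c₁, …, c_n`; its entry in a row from the `i`-th row
block and a column from the `j`-th column block is `z_{ij}`.  Then
`per B(Z) = (∏ᵢ rᵢ!)(∏ⱼ cⱼ!) Σ_{D ∈ A_+(R,C)} ∏_{i,j} z_{ij}^{d_{ij}}/d_{ij}!`. -/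
theorem stmt17 (m n N : ℕ) (R : Fin m → ℕ) (C : Fin n → ℕ)
    (hR : ∀ i, 0 < R i) (hC : ∀ j, 0 < C j)
    (hRN : ∑ i, R i = N) (hCN : ∑ j, C j = N)
    (Z : Matrix (Fin m) (Fin n) ℝ)
    (rb : Fin N → Fin m) (cb : Fin N → Fin n)
    (hrb : ∀ i, (Finset.univ.filter (fun a => rb a = i)).card = R i)
    (hcb : ∀ j, (Finset.univ.filter (fun b => cb b = j)).card = C j)
    (B : Matrix (Fin N) (Fin N) ℝ)
    (hB : ∀ a b, B a b = Z (rb a) (cb b)) :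
    B.permanent =
      (∏ i, (Nat.factorial (R i) : ℝ)) * (∏ j, (Nat.factorial (C j) : ℝ)) *
        ∑ᶠ D ∈ matAplus R C, ∏ i, ∏ j, Z i j ^ D i j / (Nat.factorial (D i j) : ℝ) := by
  have hfin : (matAplus R C).Finite := by
    have hsub : matAplus R C ⊆
        Set.range (fun g : Fin m → Fin n → Fin (N+1) => fun i j => ((g i j : ℕ))) := by
      rintro D ⟨hD1, hD2⟩
      have hb : ∀ i j, D i j < N + 1 := by
        intro i j
        have h1 : D i j ≤ R i := by
          rw [← hD1 i]; exact Finset.single_le_sum (fun _ _ => Nat.zero_le _) (mem_univ j)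
        have h2 : R i ≤ N := by
          rw [← hRN]; exact Finset.single_le_sum (fun _ _ => Nat.zero_le _) (mem_univ i)
        omega
      exact ⟨fun i j => ⟨D i j, hb i j⟩, rfl⟩
    exact (Set.finite_range _).subset hsub
  rw [finsum_mem_eq_finite_toFinset_sum _ hfin]
  have hmem : ∀ D : Matrix (Fin m) (Fin n) ℕ, D ∈ hfin.toFinset ↔
      ((∀ i, ∑ j, D i j = R i) ∧ (∀ j, ∑ i, D i j = C j)) := by
    intro D; rw [Set.Finite.mem_toFinset]; rfl
  rw [Matrix.permanent]
  have hZ : ∀ σ : Equiv.Perm (Fin N),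
      ∏ a, B (σ a) a = ∏ i, ∏ j, Z i j ^ Phi rb cb σ i j := by
    intro σ
    rw [Finset.prod_congr rfl (fun a (_ : a ∈ univ) => hB (σ a) a)]
    exact prod_block rb cb Z σ
  rw [Finset.sum_congr rfl (fun σ _ => hZ σ)]
  have hmapsto : ∀ σ ∈ (univ : Finset (Equiv.Perm (Fin N))), Phi rb cb σ ∈ hfin.toFinset := by
    intro σ _
    rw [hmem]
    constructor
    · intro i; rw [Phi_row, filter_card_perm σ (fun a => rb a = i), hrb]
    · intro j; rw [Phi_col, hcb]
  rw [← Finset.sum_fiberwise_of_maps_to hmapsto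
    (fun σ => ∏ i, ∏ j, Z i j ^ Phi rb cb σ i j)]
  rw [Finset.mul_sum]
  refine Finset.sum_congr rfl fun D hD => ?_
  obtain ⟨hD1, hD2⟩ := (hmem D).mp hD
  have hcount := count_fiber R C rb cb hrb hcb hRN D hD1 hD2
  have hin : ∑ σ ∈ univ.filter (fun σ : Equiv.Perm (Fin N) => Phi rb cb σ = D),
      ∏ i, ∏ j, Z i j ^ Phi rb cb σ i j
      = ((univ.filter (fun σ : Equiv.Perm (Fin N) => Phi rb cb σ = D)).card : ℝ)
        * ∏ i, ∏ j, Z i j ^ D i j := by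
    have e5 : (∑ σ ∈ univ.filter (fun σ : Equiv.Perm (Fin N) => Phi rb cb σ = D),
          ∏ i, ∏ j, Z i j ^ Phi rb cb σ i j)
        = ∑ _σ ∈ univ.filter (fun σ : Equiv.Perm (Fin N) => Phi rb cb σ = D),
          ∏ i, ∏ j, Z i j ^ D i j :=
      Finset.sum_congr rfl fun σ hσ => by rw [(mem_filter.mp hσ).2]
    rw [e5, Finset.sum_const, nsmul_eq_mul]
  rw [hin]
  have hQpos : (0:ℝ) < ∏ i, ∏ j, (Nat.factorial (D i j) : ℝ) := by positivity
  have hcast : ((univ.filter (fun σ : Equiv.Perm (Fin N) => Phi rb cb σ = D)).card : ℝ)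
      * ∏ i, ∏ j, (Nat.factorial (D i j) : ℝ)
      = (∏ i, (Nat.factorial (R i) : ℝ)) * ∏ j, (Nat.factorial (C j) : ℝ) := by
    have := congrArg (fun x : ℕ => (x : ℝ)) hcount
    push_cast at this
    exact this
  have hsplit : ∏ i, ∏ j, (Z i j ^ D i j / (Nat.factorial (D i j) : ℝ))
      = (∏ i, ∏ j, Z i j ^ D i j) / ∏ i, ∏ j, (Nat.factorial (D i j) : ℝ) := by
    rw [← Finset.prod_div_distrib]
    exact Finset.prod_congr rfl fun i _ => by rw [← Finset.prod_div_distrib]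
  rw [hsplit, ← hcast, mul_assoc]
  congr 1
  rw [mul_div_cancel₀ _ (ne_of_gt hQpos)]
end
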